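/- arXiv:1802.06303 — 13 statements merged into one kernel-verified Lean document; each statement's English description precedes it below -/
import Mathlib

section
/- Let φ : ℝ → ℝ ∪ {+∞} be lower semicontinuous on [a,b] with φ(a) < +∞, and suppose the lower right Dini derivative D₊φ(t) := liminf_{s↘0} (φ(t+s) − φ(t))/s satisfies D₊φ(t) ≤ 0 for every t ∈ [a,b). Then φ is nonincreasing on [a,b] (in particular φ is finite on all of [a,b]). -/
open Filter Set Topology MeasureTheory

/-- Lower right Dini derivative of an extended-real-valued function
(set to `⊥` where the function takes the value `⊤`). -/
noncomputable def DlowE (φ : ℝ → EReal) (t : ℝ) : EReal :=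
  if φ t = ⊤ then ⊥ else
    Filter.liminf (fun s : ℝ => (φ (t + s) - φ t) * (((s⁻¹ : ℝ)) : EReal))
      (nhdsWithin 0 (Set.Ioi 0))

/-- Lower right Dini derivative of a real-valued function. -/
noncomputable def DlowR (φ : ℝ → ℝ) (t : ℝ) : EReal :=
  Filter.liminf (fun s : ℝ => (((φ (t + s) - φ t) / s : ℝ) : EReal))
    (nhdsWithin 0 (Set.Ioi 0))

/-- Upper right Dini derivative of a real-valued function. -/
noncomputable def DupR (φ : ℝ → ℝ) (t : ℝ) : EReal :=
  Filter.limsup (fun s : ℝ => (((φ (t + s) - φ t) / s : ℝ) : EReal))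
    (nhdsWithin 0 (Set.Ioi 0))

lemma key (φ : ℝ → EReal) (a b : ℝ)
    (hbot : ∀ t, φ t ≠ ⊥)
    (hlsc : LowerSemicontinuousOn φ (Set.Icc a b))
    (hD : ∀ t ∈ Set.Ico a b, DlowE φ t ≤ 0)
    (c d : ℝ) (hc : c ∈ Set.Icc a b) (hd : d ∈ Set.Icc a b) (hcd : c ≤ d)
    (hct : φ c ≠ ⊤) (ε : ℝ) (hε : 0 < ε) :
    φ d ≤ (((φ c).toReal + ε * (d - c) : ℝ) : EReal) := by
  set p := (φ c).toReal with hp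
  have hφc : φ c = (p : EReal) := (EReal.coe_toReal hct (hbot c)).symm
  set S : Set ℝ := {t | t ∈ Set.Icc c d ∧ φ t ≤ ((p + ε * (t - c) : ℝ) : EReal)} with hS
  have hcS : c ∈ S := ⟨⟨le_refl c, hcd⟩, by simp [hφc]⟩
  have hSsub : S ⊆ Set.Icc c d := fun t ht => ht.1
  have hSne : S.Nonempty := ⟨c, hcS⟩
  have hSbdd : BddAbove S := ⟨d, fun t ht => ht.1.2⟩
  set T := sSup S with hT
  have hcT : c ≤ T := le_csSup hSbdd hcS
  have hTd : T ≤ d := csSup_le hSne (fun t ht => ht.1.2)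
  have hsubab : Set.Icc c d ⊆ Set.Icc a b := Set.Icc_subset_Icc hc.1 hd.2
  have hTab : T ∈ Set.Icc a b := hsubab ⟨hcT, hTd⟩
  have hTcl : T ∈ closure S := csSup_mem_closure hSne hSbdd
  have hTS : φ T ≤ ((p + ε * (T - c) : ℝ) : EReal) := by
    by_contra h
    push_neg at h
    have hne : (𝓝[S] T).NeBot := mem_closure_iff_nhdsWithin_neBot.1 hTcl
    have hev := hlsc T hTab _ h
    have hev' : ∀ᶠ x in 𝓝[S] T, ((p + ε * (T - c) : ℝ) : EReal) < φ x :=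
      hev.filter_mono (nhdsWithin_mono T (hSsub.trans hsubab))
    have hevS : ∀ᶠ x in 𝓝[S] T, x ∈ S := self_mem_nhdsWithin
    obtain ⟨x, hx1, hx2⟩ := (hev'.and hevS).exists
    have hxle : φ x ≤ ((p + ε * (x - c) : ℝ) : EReal) := hx2.2
    have hxT : x ≤ T := le_csSup hSbdd hx2
    have hmono : ((p + ε * (x - c) : ℝ) : EReal) ≤ ((p + ε * (T - c) : ℝ) : EReal) := by
      exact_mod_cast (by nlinarith : (p + ε * (x - c) : ℝ) ≤ p + ε * (T - c))
    exact absurd (hx1.trans_le hxle) (not_lt.2 hmono)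
  rcases eq_or_lt_of_le hTd with heq | hTlt
  · rw [← heq]; exact hTS
  · exfalso
    have hTIco : T ∈ Set.Ico a b := ⟨hTab.1, lt_of_lt_of_le hTlt hd.2⟩
    have hφT : φ T ≠ ⊤ := by
      intro h; rw [h, top_le_iff] at hTS; exact EReal.coe_ne_top _ hTS
    have hDT := hD T hTIco
    rw [DlowE, if_neg hφT] at hDT
    have hfreq : ∃ᶠ s in 𝓝[>] (0:ℝ),
        (φ (T + s) - φ T) * ((s⁻¹ : ℝ) : EReal) < (ε : EReal) :=
      frequently_lt_of_liminf_lt (by isBoundedDefault)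
        (lt_of_le_of_lt hDT (by exact_mod_cast hε))
    have hev : ∀ᶠ s in 𝓝[>] (0:ℝ), s < d - T ∧ 0 < s := by
      filter_upwards [eventually_nhdsWithin_of_eventually_nhds
        (gt_mem_nhds (by linarith : (0:ℝ) < d - T)), self_mem_nhdsWithin] with s h1 h2
      exact ⟨h1, h2⟩
    obtain ⟨s, hslt, hsd, hs0⟩ := (hfreq.and_eventually hev).exists
    set q := (φ T).toReal with hq
    have hφTq : φ T = (q : EReal) := (EReal.coe_toReal hφT (hbot T)).symm
    have hqp : q ≤ p + ε * (T - c) := by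
      rw [hφTq] at hTS; exact_mod_cast hTS
    have hnew : φ (T + s) < ((q + ε * s : ℝ) : EReal) := by
      rcases eq_or_ne (φ (T + s)) ⊤ with htop | htop
      · exfalso
        rw [htop, hφTq] at hslt
        have h1 : ((⊤ : EReal) - (q : EReal)) = ⊤ := by
          simp
        rw [h1, EReal.top_mul_of_pos (by exact_mod_cast inv_pos.2 hs0)] at hslt
        exact absurd hslt (by simp)
      · set r := (φ (T + s)).toReal with hr'
        have hr : φ (T + s) = (r : EReal) := (EReal.coe_toReal htop (hbot _)).symm
        rw [hr, hφTq, ← EReal.coe_sub, ← EReal.coe_mul] at hslt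
        have h2 : (r - q) * s⁻¹ < ε := by exact_mod_cast hslt
        have h3 : r - q < ε * s := by
          have := mul_lt_mul_of_pos_right h2 hs0
          rwa [mul_assoc, inv_mul_cancel₀ hs0.ne', mul_one] at this
        rw [hr]
        exact_mod_cast (by linarith : r < q + ε * s)
    have hmem : T + s ∈ S := by
      refine ⟨⟨by linarith, by linarith⟩, ?_⟩
      have : ((q + ε * s : ℝ) : EReal) ≤ ((p + ε * (T + s - c) : ℝ) : EReal) := by
        exact_mod_cast (by nlinarith : (q + ε * s : ℝ) ≤ p + ε * (T + s - c))
      exact (hnew.trans_le this).le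
    have := le_csSup hSbdd hmem
    linarith

lemma key2 (φ : ℝ → EReal) (a b : ℝ)
    (hbot : ∀ t, φ t ≠ ⊥)
    (hlsc : LowerSemicontinuousOn φ (Set.Icc a b))
    (hD : ∀ t ∈ Set.Ico a b, DlowE φ t ≤ 0)
    (c d : ℝ) (hc : c ∈ Set.Icc a b) (hd : d ∈ Set.Icc a b) (hcd : c ≤ d)
    (hct : φ c ≠ ⊤) : φ d ≤ φ c := by
  by_contra h
  push_neg at h
  set p := (φ c).toReal with hp
  have hφc : φ c = (p : EReal) := (EReal.coe_toReal hct (hbot c)).symm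
  rcases eq_or_lt_of_le hcd with rfl | hlt
  · exact absurd h (lt_irrefl _)
  · obtain ⟨r, hr1, hr2⟩ : ∃ r : ℝ, φ c < (r : EReal) ∧ (r : EReal) < φ d := by
      rw [hφc] at h ⊢
      exact EReal.exists_between_coe_real h
    have hpr : p < r := by rw [hφc] at hr1; exact_mod_cast hr1
    set ε := (r - p) / (d - c) with hε
    have hεpos : 0 < ε := div_pos (by linarith) (by linarith)
    have := key φ a b hbot hlsc hD c d hc hd hcd hct ε hεpos
    rw [← hp] at this
    have heq : p + ε * (d - c) = r := by
      rw [hε, div_mul_cancel₀ (r - p) (sub_ne_zero.2 hlt.ne')]; ring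
    rw [heq] at this
    exact absurd (hr2.trans_le this) (lt_irrefl _)

/-- Monotonicity test (lsc version): if `φ` is lsc on `[a,b]`, finite at `a`,
never `-∞`, and `D₊φ ≤ 0` on `[a,b)`, then `φ` is nonincreasing on `[a,b]`
(in particular finite on `[a,b]`). -/
theorem stmt0 (φ : ℝ → EReal) (a b : ℝ) (hab : a ≤ b)
    (hbot : ∀ t, φ t ≠ ⊥)
    (hlsc : LowerSemicontinuousOn φ (Set.Icc a b))
    (ha : φ a ≠ ⊤)
    (hD : ∀ t ∈ Set.Ico a b, DlowE φ t ≤ 0) :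
    (∀ c ∈ Set.Icc a b, ∀ d ∈ Set.Icc a b, c ≤ d → φ d ≤ φ c) ∧
      (∀ t ∈ Set.Icc a b, φ t ≠ ⊤) := by
  have hfin : ∀ t ∈ Set.Icc a b, φ t ≠ ⊤ := by
    intro t ht
    have := key2 φ a b hbot hlsc hD a t ⟨le_refl a, hab⟩ ht ht.1 ha
    intro htop
    rw [htop, top_le_iff] at this
    exact ha this
  refine ⟨fun c hc d hd hcd => key2 φ a b hbot hlsc hD c d hc hd hcd (hfin c hc), hfin⟩
end

section
/- Let φ : ℝ → ℝ ∪ {+∞} with φ(a) finite, b > a, φ lower semicontinuous on [a,b], and suppose D₊φ(t) ≤ 0 for all t ∈ [a,b). Then φ(b) ≤ φ(a). -/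
open Filter Set Topology MeasureTheory

/-- If `φ` is lsc on `[a,b]`, `φ(a)` finite, `φ` never `-∞`, `b > a`,
and `D₊φ(t) ≤ 0` for all `t ∈ [a,b)`, then `φ(b) ≤ φ(a)`. -/
theorem stmt2 (φ : ℝ → EReal) (a b : ℝ) (hab : a < b)
    (hbot : ∀ t, φ t ≠ ⊥)
    (hlsc : LowerSemicontinuousOn φ (Set.Icc a b))
    (ha : φ a ≠ ⊤)
    (hD : ∀ t ∈ Set.Ico a b, DlowE φ t ≤ 0) :
    φ b ≤ φ a := by
  set r : ℝ := (φ a).toReal with hr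
  have hφa : φ a = (r : EReal) := (EReal.coe_toReal ha (hbot a)).symm
  have key : ∀ ε : ℝ, 0 < ε → φ b ≤ ((r + ε * (b - a) : ℝ) : EReal) := by
    intro ε hε
    set S : Set ℝ := {t | t ∈ Set.Icc a b ∧ φ t ≤ ((r + ε * (t - a) : ℝ) : EReal)} with hS
    have haS : a ∈ S := by
      refine ⟨⟨le_refl a, hab.le⟩, ?_⟩
      simp [hφa]
    have hSne : S.Nonempty := ⟨a, haS⟩
    have hSbdd : BddAbove S := ⟨b, fun t ht => ht.1.2⟩
    set c : ℝ := sSup S with hc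
    have hlub : IsLUB S c := isLUB_csSup hSne hSbdd
    have hac : a ≤ c := hlub.1 haS
    have hcb : c ≤ b := hlub.2 fun t ht => ht.1.2
    have hcIcc : c ∈ Set.Icc a b := ⟨hac, hcb⟩
    -- c ∈ S
    have hcS : c ∈ S := by
      refine ⟨hcIcc, ?_⟩
      by_contra h
      have hlt : ((r + ε * (c - a) : ℝ) : EReal) < φ c := lt_of_not_ge h
      have hev : ∀ᶠ t in nhdsWithin c (Set.Icc a b),
          ((r + ε * (c - a) : ℝ) : EReal) < φ t := hlsc c hcIcc _ hlt
      have hSsub : S ⊆ Set.Icc a b := fun t ht => ht.1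
      have hev' : ∀ᶠ t in nhdsWithin c S,
          ((r + ε * (c - a) : ℝ) : EReal) < φ t :=
        (nhdsWithin_mono c hSsub) hev
      have hclos : c ∈ closure S := hlub.mem_closure hSne
      have hne : (nhdsWithin c S).NeBot := mem_closure_iff_nhdsWithin_neBot.mp hclos
      have hmem : ∀ᶠ t in nhdsWithin c S, t ∈ S := eventually_mem_nhdsWithin
      obtain ⟨t, ht1, ht2⟩ := (hev'.and hmem).exists
      have htc : t ≤ c := hlub.1 ht2
      have : φ t ≤ ((r + ε * (c - a) : ℝ) : EReal) := by
        refine le_trans ht2.2 ?_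
        exact_mod_cast by nlinarith
      exact absurd (lt_of_lt_of_le ht1 this) (lt_irrefl _)
    -- c = b
    have hcbeq : c = b := by
      by_contra hne
      have hcb' : c < b := lt_of_le_of_ne hcb hne
      have hφc_ne_top : φ c ≠ ⊤ := by
        intro h
        have h2 := hcS.2
        rw [h] at h2
        exact EReal.coe_ne_top _ (top_le_iff.mp h2)
      have hDc : DlowE φ c ≤ 0 := hD c ⟨hac, hcb'⟩
      have hliminf : Filter.liminf
          (fun s : ℝ => (φ (c + s) - φ c) * (((s⁻¹ : ℝ)) : EReal))
          (nhdsWithin 0 (Set.Ioi 0)) < (ε : EReal) := by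
        have := hDc
        rw [DlowE, if_neg hφc_ne_top] at this
        exact lt_of_le_of_lt this (by exact_mod_cast hε)
      have hfreq : ∃ᶠ s in nhdsWithin 0 (Set.Ioi 0),
          (φ (c + s) - φ c) * (((s⁻¹ : ℝ)) : EReal) < (ε : EReal) :=
        Filter.frequently_lt_of_liminf_lt (by isBoundedDefault) hliminf
      have hev : ∀ᶠ s in nhdsWithin 0 (Set.Ioi 0), s ∈ Set.Ioo (0:ℝ) (b - c) :=
        Filter.eventually_of_mem (Ioo_mem_nhdsGT_of_mem ⟨le_refl 0, by linarith⟩)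
          (fun s hs => hs)
      obtain ⟨s, hs1, hs2⟩ := (hfreq.and_eventually hev).exists
      obtain ⟨hs0, hsb⟩ := hs2
      set p : ℝ := (φ c).toReal with hp
      have hφc : φ c = (p : EReal) := (EReal.coe_toReal hφc_ne_top (hbot c)).symm
      have hpr : p ≤ r + ε * (c - a) := by
        have := hcS.2
        rw [hφc] at this
        exact_mod_cast this
      have hφcs_ne_top : φ (c + s) ≠ ⊤ := by
        intro h
        rw [h, hφc, EReal.top_sub_coe] at hs1
        rw [EReal.top_mul_of_pos (by exact_mod_cast inv_pos.mpr hs0)] at hs1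
        exact absurd hs1 (by simp)
      set q : ℝ := (φ (c + s)).toReal with hq
      have hφcs : φ (c + s) = (q : EReal) := (EReal.coe_toReal hφcs_ne_top (hbot (c+s))).symm
      rw [hφcs, hφc] at hs1
      have hs1' : ((q - p) * s⁻¹ : ℝ) < ε := by
        have : (((q - p) * s⁻¹ : ℝ) : EReal) < (ε : EReal) := by
          rw [EReal.coe_mul, EReal.coe_sub]
          exact hs1
        exact_mod_cast this
      have hq' : q < p + ε * s := by
        have hsne : s ≠ 0 := ne_of_gt hs0
        have := (div_lt_iff₀ hs0).mp (by rw [div_eq_mul_inv]; exact hs1')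
        linarith
      have hcsS : c + s ∈ S := by
        refine ⟨⟨by linarith, by linarith⟩, ?_⟩
        rw [hφcs]
        exact_mod_cast by nlinarith
      have : c + s ≤ c := hlub.1 hcsS
      linarith
    have := hcS.2
    rwa [hcbeq] at this
  -- take ε → 0
  have htend : Filter.Tendsto (fun ε : ℝ => ((r + ε * (b - a) : ℝ) : EReal))
      (nhdsWithin 0 (Set.Ioi 0)) (nhds ((r : EReal))) := by
    have h1 : Filter.Tendsto (fun ε : ℝ => (r + ε * (b - a) : ℝ)) (nhds 0) (nhds r) := by
      have : Filter.Tendsto (fun ε : ℝ => (r + ε * (b - a) : ℝ)) (nhds 0)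
          (nhds (r + 0 * (b - a))) := by
        exact (continuous_const.add (continuous_id.mul continuous_const)).tendsto 0
      simpa using this
    exact (continuous_coe_real_ereal.tendsto r).comp (h1.mono_left nhdsWithin_le_nhds)
  have hle : φ b ≤ (r : EReal) := by
    refine ge_of_tendsto htend ?_
    filter_upwards [eventually_mem_nhdsWithin] with ε hε
    exact key ε hε
  rwa [hφa]
end

section
/- Mean value inequality: let φ : ℝ → ℝ ∪ {+∞} be lower semicontinuous on [a,c] with φ(a) finite, and let μ ∈ ℝ with μ ≤ φ(c) − φ(a). Then there exists x₀ ∈ [a,c) such that μ ≤ (c − a)·D₊φ(x₀). -/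
open Filter Set Topology MeasureTheory

/-!
With `λ = μ / (c - a)`, the function `g = φ - λ·id` is lower semicontinuous on `[a, c]`, so it
attains its minimum there, and `g a ≤ g c` lets us choose the minimizer `x₀` in `[a, c)`. Since
`x₀` minimizes `g` to its right, every right difference quotient of `φ` at `x₀` is at least `λ`,
hence `λ ≤ D₊φ(x₀)`.
-/

theorem LowerSemicontinuousOn.sub_coe_real {α : Type*} [TopologicalSpace α] {s : Set α}
    {f : α → EReal} {g : α → ℝ} (hf : LowerSemicontinuousOn f s) (hg : ContinuousOn g s) :
    LowerSemicontinuousOn (fun x => f x - g x) s := by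
  have hg' : ContinuousOn (fun x => ((-g x : ℝ) : EReal)) s :=
    continuous_coe_real_ereal.comp_continuousOn hg.neg
  simpa only [sub_eq_add_neg, ← EReal.coe_neg] using hf.add' hg'.lowerSemicontinuousOn
    fun _ _ => EReal.continuousAt_add (.inr (EReal.coe_ne_bot _)) (.inr (EReal.coe_ne_top _))

theorem LowerSemicontinuousOn.exists_isMinOn_Icc_mem_Ico {α β : Type*} [LinearOrder α]
    [TopologicalSpace α] [CompactIccSpace α] [LinearOrder β] [TopologicalSpace β]
    [ClosedIicTopology β] {f : α → β} {a c : α} (hac : a < c)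
    (hf : LowerSemicontinuousOn f (Icc a c)) (hfac : f a ≤ f c) :
    ∃ x ∈ Ico a c, IsMinOn f (Icc a c) x := by
  obtain ⟨x, hx, hmin⟩ := hf.exists_isMinOn (nonempty_Icc.2 hac.le) isCompact_Icc
  rcases hx.2.lt_or_eq with hxc | rfl
  · exact ⟨x, ⟨hx.1, hxc⟩, hmin⟩
  · exact ⟨a, left_mem_Ico.2 hac, fun y hy => hfac.trans (hmin hy)⟩

theorem coe_le_DlowE_of_isMinFilter {φ : ℝ → EReal} {x lam : ℝ} (htop : φ x ≠ ⊤)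
    (hbot : φ x ≠ ⊥) (hmin : IsMinFilter (fun y => φ y - (lam * y : ℝ)) (𝓝[>] x) x) :
    (lam : EReal) ≤ DlowE φ x := by
  lift φ x to ℝ using ⟨htop, hbot⟩ with p hp
  have htendsto : Tendsto (x + ·) (𝓝[>] 0) (𝓝[>] x) :=
    tendsto_nhdsWithin_of_tendsto_nhds_of_eventually_within _
      (tendsto_nhdsWithin_of_tendsto_nhds (by simpa using (continuous_const_add x).tendsto 0))
      (by filter_upwards [self_mem_nhdsWithin] with s hs using by simpa using hs)
  rw [DlowE, if_neg (hp ▸ EReal.coe_ne_top p)]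
  refine le_liminf_of_le (by isBoundedDefault) ?_
  filter_upwards [htendsto.eventually hmin, self_mem_nhdsWithin] with s hs (hs0 : 0 < s)
  simp only [← hp] at hs ⊢
  generalize φ (x + s) = w at hs ⊢
  induction w using EReal.rec with
  | bot => norm_cast at hs
  | top => simp [EReal.top_mul_coe_of_pos (inv_pos.2 hs0)]
  | coe v =>
    norm_cast at hs ⊢
    rw [← div_eq_mul_inv, le_div_iff₀ hs0]
    nlinarith

/-- Mean value inequality: if `φ` is lsc on `[a,c]` with `φ(a)` finite and
`μ ≤ φ(c) - φ(a)`, then there is `x₀ ∈ [a,c)` with `μ ≤ (c-a)·D₊φ(x₀)`. -/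
theorem stmt3 (φ : ℝ → EReal) (a c μ : ℝ) (hac : a < c)
    (hbot : ∀ t, φ t ≠ ⊥)
    (hlsc : LowerSemicontinuousOn φ (Set.Icc a c))
    (ha : φ a ≠ ⊤)
    (hμ : (μ : EReal) ≤ φ c - φ a) :
    ∃ x₀ ∈ Set.Ico a c, (μ : EReal) ≤ ((c - a : ℝ) : EReal) * DlowE φ x₀ := by
  set lam := μ / (c - a)
  have hμlam : (c - a) * lam = μ := mul_div_cancel₀ μ (sub_ne_zero.2 hac.ne')
  set g : ℝ → EReal := fun y => φ y - (lam * y : ℝ)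
  have hg : LowerSemicontinuousOn g (Icc a c) := hlsc.sub_coe_real (by fun_prop)
  lift φ a to ℝ using ⟨ha, hbot a⟩ with p hp
  have hgac : g a ≤ g c := calc
    g a = ((μ + p : ℝ) : EReal) - (lam * c : ℝ) := by
      simp only [g, ← hp]; norm_cast; rw [← hμlam]; ring
    _ ≤ g c := EReal.sub_le_sub (by push_cast; exact EReal.add_le_of_le_sub hμ) le_rfl
  obtain ⟨x₀, hx₀, hmin⟩ := hg.exists_isMinOn_Icc_mem_Ico hac hgac
  have hx₀top : φ x₀ ≠ ⊤ := by
    have hle : g x₀ ≤ g a := hmin (left_mem_Icc.2 hac.le)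
    intro htop
    simp only [g, htop, ← hp, EReal.top_sub_coe, top_le_iff, ← EReal.coe_sub] at hle
    exact EReal.coe_ne_top _ hle
  have hD : (lam : EReal) ≤ DlowE φ x₀ := coe_le_DlowE_of_isMinFilter hx₀top (hbot x₀)
    (hmin.filter_mono (le_principal_iff.2 (Icc_mem_nhdsGT_of_mem hx₀)))
  refine ⟨x₀, hx₀, ?_⟩
  calc (μ : EReal) = ((c - a : ℝ) : EReal) * lam := by rw [← hμlam, EReal.coe_mul]
    _ ≤ ((c - a : ℝ) : EReal) * DlowE φ x₀ :=
      mul_le_mul_of_nonneg_left hD (EReal.coe_nonneg.2 (sub_pos.2 hac).le)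
end

section
/- If φ : [a,b] → ℝ is continuous and right-differentiable at all but countably many points of [a,b], then φ is ACG* on [a,b] (generalized absolutely continuous in the restricted sense). -/
open Filter Set Topology MeasureTheory

/-- Oscillation of `φ` on the interval `[c,d]`. -/
noncomputable def osc (φ : ℝ → ℝ) (c d : ℝ) : ℝ :=
  sSup {r | ∃ x y : ℝ, c ≤ x ∧ x ≤ y ∧ y ≤ d ∧ r = |φ y - φ x|}

/-- A finite family of intervals `[c i, d i]` is non-overlapping with endpoints in `S`. -/
def GoodIntervals (S : Set ℝ) {n : ℕ} (c d : Fin n → ℝ) : Prop :=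
  (∀ i, c i ∈ S ∧ d i ∈ S ∧ c i ≤ d i) ∧
    Pairwise fun i j => d i ≤ c j ∨ d j ≤ c i

/-- `φ` is absolutely continuous (AC) on `S`. -/
def FnAC (φ : ℝ → ℝ) (S : Set ℝ) : Prop :=
  ∀ ε > 0, ∃ δ > 0, ∀ (n : ℕ) (c d : Fin n → ℝ),
    GoodIntervals S c d → (∑ i, (d i - c i)) < δ →
      (∑ i, |φ (d i) - φ (c i)|) < ε

/-- `φ` is absolutely continuous in the restricted sense (AC*) on `S`. -/
def FnACstar (φ : ℝ → ℝ) (S : Set ℝ) : Prop :=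
  ∀ ε > 0, ∃ δ > 0, ∀ (n : ℕ) (c d : Fin n → ℝ),
    GoodIntervals S c d → (∑ i, (d i - c i)) < δ →
      (∑ i, osc φ (c i) (d i)) < ε

/-- `φ` is generalized absolutely continuous (ACG) on `[a,b]`. -/
def FnACG (φ : ℝ → ℝ) (a b : ℝ) : Prop :=
  ContinuousOn φ (Set.Icc a b) ∧
    ∃ S : ℕ → Set ℝ, (⋃ n, S n) = Set.Icc a b ∧ ∀ n, FnAC φ (S n)

/-- `φ` is generalized absolutely continuous in the restricted sense (ACG*) on `[a,b]`. -/
def FnACGstar (φ : ℝ → ℝ) (a b : ℝ) : Prop :=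
  ContinuousOn φ (Set.Icc a b) ∧
    ∃ S : ℕ → Set ℝ, (⋃ n, S n) = Set.Icc a b ∧ ∀ n, FnACstar φ (S n)

/-- `f` has Henstock–Kurzweil integral `I` on `[a,b]`. -/
def HasHKIntegral (f : ℝ → ℝ) (a b I : ℝ) : Prop :=
  ∀ ε > 0, ∃ δ : ℝ → ℝ, (∀ t ∈ Set.Icc a b, 0 < δ t) ∧
    ∀ (n : ℕ) (x : Fin (n + 1) → ℝ) (t : Fin n → ℝ),
      Monotone x → x 0 = a → x (Fin.last n) = b →
      (∀ i : Fin n, t i ∈ Set.Icc (x i.castSucc) (x i.succ)) →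
      (∀ i : Fin n, x i.succ - x i.castSucc < δ (t i)) →
      |(∑ i : Fin n, f (t i) * (x i.succ - x i.castSucc)) - I| < ε

/-!
Off the countable exceptional set, right-differentiability at `t` bounds the right difference
quotients of `φ` near `t`: for some `k`, `|φ (t + s) - φ t| ≤ k * s` whenever `0 < s ≤ 1 / (k + 1)`.
On the set of points where this bound holds, cut into pieces of length `1 / (k + 1)`, the
oscillation of `φ` on an interval is at most `2 k` times its length, which gives AC*. Countably
many such pieces together with the singletons of the exceptional set cover `[a, b]`.
-/

lemma osc_le_two_mul_of_abs_sub_le {φ : ℝ → ℝ} {c d M : ℝ} (hM : 0 ≤ M)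
    (h : ∀ x, c ≤ x → x ≤ d → |φ x - φ c| ≤ M) :
    osc φ c d ≤ 2 * M := by
  refine Real.sSup_le ?_ (by linarith)
  rintro r ⟨x, y, hcx, hxy, hyd, rfl⟩
  have hx := h x hcx (hxy.trans hyd)
  have hy := h y (hcx.trans hxy) hyd
  calc |φ y - φ x| = |(φ y - φ c) - (φ x - φ c)| := by ring_nf
    _ ≤ |φ y - φ c| + |φ x - φ c| := abs_sub _ _
    _ ≤ 2 * M := by linarith

lemma FnACstar.mono {φ : ℝ → ℝ} {S T : Set ℝ} (h : FnACstar φ T) (hST : S ⊆ T) :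
    FnACstar φ S := by
  intro ε hε
  obtain ⟨δ, hδ, hδε⟩ := h ε hε
  refine ⟨δ, hδ, fun n c d hcd hsum => hδε n c d ⟨fun i => ?_, hcd.2⟩ hsum⟩
  obtain ⟨hc, hd, hle⟩ := hcd.1 i
  exact ⟨hST hc, hST hd, hle⟩

lemma fnACstar_of_osc_le_mul {φ : ℝ → ℝ} {S : Set ℝ} {M : ℝ} (hM : 0 ≤ M)
    (h : ∀ c ∈ S, ∀ d ∈ S, c ≤ d → osc φ c d ≤ M * (d - c)) : FnACstar φ S := by
  intro ε hε
  refine ⟨ε / (M + 1), by positivity, fun n c d hcd hsum => ?_⟩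
  calc ∑ i, osc φ (c i) (d i)
      ≤ ∑ i, M * (d i - c i) := Finset.sum_le_sum fun i _ =>
        h _ (hcd.1 i).1 _ (hcd.1 i).2.1 (hcd.1 i).2.2
    _ = M * ∑ i, (d i - c i) := (Finset.mul_sum _ _ _).symm
    _ ≤ M * (ε / (M + 1)) := mul_le_mul_of_nonneg_left hsum.le hM
    _ < ε := by rw [mul_div_assoc', div_lt_iff₀ (by positivity)]; nlinarith

lemma fnACstar_of_subsingleton {φ : ℝ → ℝ} {S : Set ℝ} (hS : S.Subsingleton) :
    FnACstar φ S := by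
  refine fnACstar_of_osc_le_mul le_rfl fun c hc d hd _ => ?_
  obtain rfl := hS hc hd
  have := osc_le_two_mul_of_abs_sub_le (φ := φ) (c := c) (d := c) le_rfl fun x hcx hxc => by
    rw [le_antisymm hxc hcx, sub_self, abs_zero]
  simpa using this

def rightLipschitzSet (φ : ℝ → ℝ) (K r : ℝ) : Set ℝ :=
  {t | ∀ s, 0 < s → s ≤ r → |φ (t + s) - φ t| ≤ K * s}

lemma osc_le_of_mem_rightLipschitzSet {φ : ℝ → ℝ} {K r c d : ℝ} (hK : 0 ≤ K)
    (hc : c ∈ rightLipschitzSet φ K r) (hcd : c ≤ d) (hdr : d - c ≤ r) :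
    osc φ c d ≤ 2 * K * (d - c) := by
  rw [mul_assoc]
  refine osc_le_two_mul_of_abs_sub_le (by nlinarith) fun x hcx hxd => ?_
  rcases hcx.eq_or_lt with rfl | hlt
  · rw [sub_self, abs_zero]
    nlinarith
  · have := hc (x - c) (by linarith) (by linarith)
    rw [add_sub_cancel] at this
    nlinarith

lemma fnACstar_rightLipschitzSet_inter_Icc (φ : ℝ → ℝ) {K r u v : ℝ} (hK : 0 ≤ K)
    (huv : v - u ≤ r) : FnACstar φ (rightLipschitzSet φ K r ∩ Icc u v) :=
  fnACstar_of_osc_le_mul (by positivity) fun _ hc _ hd hcd =>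
    osc_le_of_mem_rightLipschitzSet hK hc.1 hcd (by linarith [hc.2.1, hd.2.2])

lemma exists_mem_rightLipschitzSet_of_tendsto {φ : ℝ → ℝ} {t L : ℝ}
    (hL : Tendsto (fun s => (φ (t + s) - φ t) / s) (𝓝[>] 0) (𝓝 L)) :
    ∃ k : ℕ, t ∈ rightLipschitzSet φ k (k + 1)⁻¹ := by
  have hbound : ∀ᶠ s in 𝓝[>] 0, |(φ (t + s) - φ t) / s| < |L| + 1 :=
    hL.abs.eventually (gt_mem_nhds (lt_add_one _))
  obtain ⟨δ, hδ, hδs⟩ := mem_nhdsGT_iff_exists_Ioo_subset.1 hbound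
  obtain ⟨k, hk⟩ := exists_nat_ge (max (|L| + 1) δ⁻¹)
  have hLk : |L| + 1 ≤ k := (le_max_left _ _).trans hk
  have hkδ : (k + 1 : ℝ)⁻¹ < δ := by
    rw [inv_lt_comm₀ (by positivity) hδ]
    linarith [le_max_right (|L| + 1) δ⁻¹]
  refine ⟨k, fun s hs hsk => ?_⟩
  have hslope : |(φ (t + s) - φ t) / s| < |L| + 1 := hδs ⟨hs, hsk.trans_lt hkδ⟩
  rw [abs_div, abs_of_pos hs, div_lt_iff₀ hs] at hslope
  nlinarith

lemma mem_Icc_floor_mul_div (t : ℝ) {n : ℝ} (hn : 0 < n) :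
    t ∈ Icc (⌊t * n⌋ / n) ((⌊t * n⌋ + 1) / n) := by
  rw [mem_Icc, div_le_iff₀ hn, le_div_iff₀ hn]
  exact ⟨Int.floor_le _, (Int.lt_floor_add_one _).le⟩

lemma fnACGstar_of_subset_iUnion {φ : ℝ → ℝ} {a b : ℝ} (hcont : ContinuousOn φ (Icc a b))
    {ι : Type*} [Countable ι] {S : ι → Set ℝ} (hS : Icc a b ⊆ ⋃ i, S i)
    (hAC : ∀ i, FnACstar φ (S i)) : FnACGstar φ a b := by
  refine ⟨hcont, ?_⟩
  -- `∅` makes the family nonempty, so that it can be enumerated by `ℕ` even when `ι` is empty.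
  obtain ⟨T, hT⟩ := ((countable_range fun i => S i ∩ Icc a b).insert ∅).exists_eq_range
    (insert_nonempty _ _)
  refine ⟨T, ?_, fun n => ?_⟩
  · rw [← sUnion_range, ← hT, sUnion_insert, empty_union, sUnion_range, ← iUnion_inter,
      inter_eq_right.2 hS]
  · have hn : T n ∈ range T := mem_range_self n
    rw [← hT] at hn
    rcases hn with hn | ⟨i, hi⟩
    · rw [hn]
      exact fnACstar_of_subsingleton subsingleton_empty
    · rw [← hi]
      exact (hAC i).mono inter_subset_left

theorem stmt4_general (φ : ℝ → ℝ) (a b : ℝ)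
    (hcont : ContinuousOn φ (Set.Icc a b))
    (C : Set ℝ) (hC : C.Countable)
    (hdiff : ∀ t ∈ Set.Icc a b \ C, ∃ L : ℝ,
      Filter.Tendsto (fun s : ℝ => (φ (t + s) - φ t) / s)
        (nhdsWithin 0 (Set.Ioi 0)) (nhds L)) :
    FnACGstar φ a b := by
  have : Countable C := hC.to_subtype
  let cell : ℕ × ℤ → Set ℝ := fun ⟨k, j⟩ =>
    rightLipschitzSet φ k (k + 1)⁻¹ ∩ Icc (j / (k + 1)) ((j + 1) / (k + 1))
  refine fnACGstar_of_subset_iUnion hcont (S := Sum.elim cell fun c : C => {(c : ℝ)})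
    (fun t ht => ?_) ?_
  · by_cases htC : t ∈ C
    · exact mem_iUnion.2 ⟨Sum.inr ⟨t, htC⟩, rfl⟩
    obtain ⟨L, hL⟩ := hdiff t ⟨ht, htC⟩
    obtain ⟨k, hk⟩ := exists_mem_rightLipschitzSet_of_tendsto hL
    exact mem_iUnion.2 ⟨Sum.inl (k, ⌊t * (k + 1)⌋), hk, mem_Icc_floor_mul_div t (by positivity)⟩
  · rintro (⟨k, j⟩ | c)
    · refine fnACstar_rightLipschitzSet_inter_Icc φ k.cast_nonneg (le_of_eq ?_)
      field_simp
      ring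
    · exact fnACstar_of_subsingleton subsingleton_singleton

/-- If `φ` is continuous on `[a,b]` and right-differentiable at all but
countably many points of `[a,b]`, then `φ` is ACG* on `[a,b]`. -/
theorem stmt4 (φ : ℝ → ℝ) (a b : ℝ) (hab : a ≤ b)
    (hcont : ContinuousOn φ (Set.Icc a b))
    (C : Set ℝ) (hC : C.Countable)
    (hdiff : ∀ t ∈ Set.Icc a b \ C, ∃ L : ℝ,
      Filter.Tendsto (fun s : ℝ => (φ (t + s) - φ t) / s)
        (nhdsWithin 0 (Set.Ioi 0)) (nhds L)) :
    FnACGstar φ a b :=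
  stmt4_general φ a b hcont C hC hdiff
end

section
/- Let f : X → ℝ ∪ {+∞} be proper lower semicontinuous on a Banach space X, x̄ ∈ dom f, u ∈ X, and suppose f(x̄) = liminf_{t↘0} f(x̄+tu). Then the upper radial subderivative satisfies f^r₊(x̄;u) ≤ f^♮(x̄;u) := inf_{α≥0} limsup_{x →_u x̄} f^r(x; u + α(x̄−x)), where x →_u x̄ means x = x̄ + t v with t ↘ 0 and v → u. -/
open Filter Set Topology

variable {X : Type*} [NormedAddCommGroup X] [NormedSpace ℝ X] [CompleteSpace X]

/-- Radial subderivative (lower right Dini derivative in the direction `u`)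
of an extended-real-valued function, set to `⊥` outside the domain. -/
noncomputable def frE (f : X → EReal) (x u : X) : EReal :=
  if f x = ⊤ then ⊥ else
    Filter.liminf (fun t : ℝ => (f (x + t • u) - f x) * (((t⁻¹ : ℝ)) : EReal))
      (nhdsWithin 0 (Set.Ioi 0))

/-- Upper radial subderivative, set to `⊥` outside the domain. -/
noncomputable def frEplus (f : X → EReal) (x u : X) : EReal :=
  if f x = ⊤ then ⊥ else
    Filter.limsup (fun t : ℝ => (f (x + t • u) - f x) * (((t⁻¹ : ℝ)) : EReal))
      (nhdsWithin 0 (Set.Ioi 0))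

/-- Directional upper regularization `f^♮(x̄;u)`: the infimum over `α ≥ 0` of the
limsup of `f^r(x; u + α(x̄ - x))` as `x = x̄ + t v → x̄` with `t ↘ 0`, `v → u`. -/
noncomputable def fnatE (f : X → EReal) (xb u : X) : EReal :=
  ⨅ (α : ℝ) (_ : 0 ≤ α),
    Filter.limsup
      (fun p : ℝ × X => frE f (xb + p.1 • p.2) (u + α • (xb - (xb + p.1 • p.2))))
      ((nhdsWithin 0 (Set.Ioi 0)) ×ˢ nhds u)

/-- Full upper regularization `f^♮♮(x̄;u)`: the infimum over `α ≥ 0` of the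
limsup of `f^r(x; u + α(x̄ - x))` as `x → x̄`. -/
noncomputable def fnatnatE (f : X → EReal) (xb u : X) : EReal :=
  ⨅ (α : ℝ) (_ : 0 ≤ α),
    Filter.limsup (fun x : X => frE f x (u + α • (xb - x))) (nhds xb)

/-!
Let `m < f^r₊(x̄;u)` and `φ t = f (x̄ + t u)`. There are arbitrarily small `s > 0` with
`φ s > φ 0 + r s` for some `r > m`, and, as `φ 0 = liminf_{t↘0} φ t`, points `0 < t < s` with
`φ t` close to `φ 0`. A mean value inequality for the lsc function `φ` on `[t, s]` then gives
arbitrarily small `c > 0` with `φ^r(c; 1) ≥ m`. At `x = x̄ + c u` the direction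
`u + α (x̄ - x) = (1 - α c) u` is a positive multiple of `u`, so
`f^r(x; u + α (x̄ - x)) ≥ (1 - α c) m`, which tends to `m` as `c ↘ 0`.
-/

namespace EReal

theorem mul_coe_inv_lt_coe_iff {d : EReal} {t m : ℝ} (ht : 0 < t) :
    d * ((t⁻¹ : ℝ) : EReal) < m ↔ d < ((m * t : ℝ) : EReal) := by
  rw [coe_inv, ← div_eq_mul_inv, ← not_le, ← not_le,
    le_div_iff_mul_le (by exact_mod_cast ht) (coe_ne_top t), ← coe_mul]

theorem coe_lt_mul_coe_inv_iff {d : EReal} {t m : ℝ} (ht : 0 < t) :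
    (m : EReal) < d * ((t⁻¹ : ℝ) : EReal) ↔ ((m * t : ℝ) : EReal) < d := by
  rw [coe_inv, ← div_eq_mul_inv, ← not_le, ← not_le,
    div_le_iff_le_mul (by exact_mod_cast ht) (coe_ne_top t), ← coe_mul, mul_comm t m]

end EReal

section Radial

variable {E : Type*} [NormedAddCommGroup E] [NormedSpace ℝ E]

theorem frE_comp_line (f : E → EReal) (x u : E) (c : ℝ) :
    frE (fun t : ℝ => f (x + t • u)) c 1 = frE f (x + c • u) u := by
  simp only [frE, smul_eq_mul, mul_one, add_smul, add_assoc]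

theorem frEplus_comp_line (f : E → EReal) (x u : E) (c : ℝ) :
    frEplus (fun t : ℝ => f (x + t • u)) c 1 = frEplus f (x + c • u) u := by
  simp only [frEplus, smul_eq_mul, mul_one, add_smul, add_assoc]

theorem frequently_lt_of_frE_lt {f : E → EReal} {x u : E} {m : ℝ} (hx_bot : f x ≠ ⊥)
    (hx_top : f x ≠ ⊤) (h : frE f x u < m) :
    ∃ᶠ t in 𝓝[>] 0, f (x + t • u) < f x + ((m * t : ℝ) : EReal) := by
  rw [frE, if_neg hx_top] at h
  refine (frequently_lt_of_liminf_lt (by isBoundedDefault) h).mp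
    (eventually_mem_nhdsWithin.mono fun t (ht : 0 < t) hlt => ?_)
  rw [EReal.mul_coe_inv_lt_coe_iff ht] at hlt
  rw [add_comm (f x)]
  exact (EReal.sub_lt_iff (.inl hx_bot) (.inl hx_top)).1 hlt

theorem frequently_lt_of_lt_frEplus {f : E → EReal} {x u : E} {m : ℝ} (hx_bot : f x ≠ ⊥)
    (h : m < frEplus f x u) :
    ∃ᶠ t in 𝓝[>] 0, f x + ((m * t : ℝ) : EReal) < f (x + t • u) := by
  have hx_top : f x ≠ ⊤ := fun hx => by simp [frEplus, hx] at h
  rw [frEplus, if_neg hx_top] at h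
  refine (frequently_lt_of_lt_limsup (by isBoundedDefault) h).mp
    (eventually_mem_nhdsWithin.mono fun t (ht : 0 < t) hlt => ?_)
  rw [EReal.coe_lt_mul_coe_inv_iff ht] at hlt
  rw [add_comm (f x)]
  exact (EReal.lt_sub_iff_add_lt (.inl hx_bot) (.inl hx_top)).1 hlt

theorem mul_le_frE_smul {f : E → EReal} {x u : E} {k m : ℝ} (hk : 0 < k)
    (h : (m : EReal) ≤ frE f x u) : ((k * m : ℝ) : EReal) ≤ frE f x (k • u) := by
  have hx_top : f x ≠ ⊤ := fun hx => by simp [frE, hx] at h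
  rw [frE, if_neg hx_top] at h ⊢
  refine EReal.ge_of_forall_gt_iff_ge.1 fun z hz => le_liminf_of_le (by isBoundedDefault) ?_
  have hzk : ((z / k : ℝ) : EReal) < m := by
    exact_mod_cast (div_lt_iff₀' hk).2 (by exact_mod_cast hz)
  have hscale : Tendsto (fun t : ℝ => k * t) (𝓝[>] 0) (𝓝[>] 0) :=
    tendsto_nhdsWithin_of_tendsto_nhds_of_eventually_within _
      (((continuous_const_mul k).tendsto' 0 0 (mul_zero k)).mono_left nhdsWithin_le_nhds)
      (eventually_mem_nhdsWithin.mono fun t (ht : 0 < t) => mul_pos hk ht)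
  filter_upwards [hscale.eventually (eventually_lt_of_lt_liminf (hzk.trans_le h)),
    self_mem_nhdsWithin] with t hlt (ht : 0 < t)
  rw [EReal.coe_lt_mul_coe_inv_iff (mul_pos hk ht), mul_smul,
    show z / k * (k * t) = z * t by field_simp] at hlt
  rw [smul_comm t k u]
  exact ((EReal.coe_lt_mul_coe_inv_iff ht).2 hlt).le

end Radial

theorem exists_mem_Ico_le_frE {g : ℝ → EReal} (hg : LowerSemicontinuous g)
    (hg_bot : ∀ t, g t ≠ ⊥) {a b m : ℝ} (hab : a < b)
    (hslope : g a + ((m * (b - a) : ℝ) : EReal) < g b) :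
    ∃ c ∈ Ico a b, (m : EReal) ≤ frE g c 1 := by
  by_contra! hcon
  have hga : g a ≠ ⊤ := fun h => by
    rw [h, EReal.top_add_coe] at hslope
    exact not_top_lt hslope
  obtain ⟨A, hA⟩ : ∃ A : ℝ, g a = A := ⟨(g a).toReal, (EReal.coe_toReal hga (hg_bot a)).symm⟩
  rw [hA] at hslope
  -- `sSup S` is the last point of `[a, b]` where `g` lies below the line of slope `m` through
  -- `(a, g a)`; a lower Dini derivative `< m` there would push `g` below the line further right.
  set S : Set ℝ := Icc a b ∩ {x | g x ≤ ((A + m * (x - a) : ℝ) : EReal)}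
  have hS_closed : IsClosed S := isClosed_Icc.inter <| hg.isClosed_epigraph.preimage
    (continuous_id.prodMk (continuous_coe_real_ereal.comp (by fun_prop)))
  have haS : a ∈ S := ⟨left_mem_Icc.2 hab.le, by simp [hA]⟩
  have hS_bdd : BddAbove S := bddAbove_Icc.mono inter_subset_left
  obtain ⟨⟨hac, hcb⟩, hgc⟩ : sSup S ∈ S := hS_closed.csSup_mem ⟨a, haS⟩ hS_bdd
  set c := sSup S
  have hcb' : c < b := by
    refine hcb.lt_of_ne fun hcb => ?_
    rw [hcb] at hgc
    rw [← EReal.coe_add] at hslope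
    exact lt_irrefl _ (lt_of_le_of_lt hgc hslope)
  have hgc_top : g c ≠ ⊤ := ne_top_of_le_ne_top (EReal.coe_ne_top _) hgc
  obtain ⟨h, ⟨hh, hhb⟩, hlt⟩ := (nhdsGT_basis 0).frequently_iff.1
    (frequently_lt_of_frE_lt (hg_bot c) hgc_top (hcon c ⟨hac, hcb'⟩)) (b - c) (by linarith)
  have hchS : c + h ∈ S := by
    refine ⟨⟨by linarith, by linarith⟩, (?_ : g (c + h) < _).le⟩
    calc g (c + h) < g c + ((m * h : ℝ) : EReal) := by simpa using hlt
      _ ≤ ((A + m * (c - a) : ℝ) : EReal) + ((m * h : ℝ) : EReal) := by gcongr; exact hgc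
      _ = ((A + m * (c + h - a) : ℝ) : EReal) := by rw [← EReal.coe_add]; ring_nf
  linarith [le_csSup hS_bdd hchS]

theorem frequently_le_frE_of_lt_frEplus {g : ℝ → EReal} (hg : LowerSemicontinuous g)
    (hg_bot : ∀ t, g t ≠ ⊥) (hlim : g 0 = liminf g (𝓝[>] 0)) {m : ℝ}
    (hm : (m : EReal) < frEplus g 0 1) : ∃ᶠ c in 𝓝[>] 0, (m : EReal) ≤ frE g c 1 := by
  obtain ⟨r, hmr, hr⟩ := EReal.lt_iff_exists_real_btwn.1 hm
  have hmr : m < r := by exact_mod_cast hmr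
  have hg0 : g 0 ≠ ⊤ := fun h => by simp [frEplus, h] at hm
  obtain ⟨A, hA⟩ : ∃ A : ℝ, g 0 = A := ⟨(g 0).toReal, (EReal.coe_toReal hg0 (hg_bot 0)).symm⟩
  refine (nhdsGT_basis 0).frequently_iff.2 fun ε hε => ?_
  obtain ⟨s, ⟨hs, hsε⟩, hgs⟩ := (nhdsGT_basis 0).frequently_iff.1
    (frequently_lt_of_lt_frEplus (hg_bot 0) hr) ε hε
  set δ := (r - m) * s / 2
  have hδ : 0 < δ := by positivity
  -- a point `t ∈ (0, s)` with `g t` close to `g 0` leaves room for a secant of slope `m`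
  have hdip : ∃ᶠ t in 𝓝[>] 0, g t < ((A + δ : ℝ) : EReal) :=
    frequently_lt_of_liminf_lt (by isBoundedDefault)
      (by rw [← hlim, hA]; exact_mod_cast by linarith)
  have hsec : ∀ᶠ t in 𝓝[>] 0, m * (s - t) < r * s - δ :=
    (((continuous_const.mul (continuous_const.sub continuous_id)).tendsto' 0 (m * s)
      (by simp)).mono_left nhdsWithin_le_nhds).eventually_lt_const (by simp only [δ]; nlinarith)
  have hts : ∀ᶠ t in 𝓝[>] 0, t < s :=
    eventually_nhdsWithin_of_eventually_nhds (eventually_lt_nhds hs)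
  obtain ⟨t, hgt, hsec, hts, ht⟩ :=
    (hdip.and_eventually (hsec.and (hts.and self_mem_nhdsWithin))).exists
  have hslope : g t + ((m * (s - t) : ℝ) : EReal) < g s :=
    calc g t + ((m * (s - t) : ℝ) : EReal) < ((A + δ : ℝ) : EReal) + ((r * s - δ : ℝ) : EReal) :=
          EReal.add_lt_add hgt (by exact_mod_cast hsec)
      _ = g 0 + ((r * s : ℝ) : EReal) := by rw [hA, ← EReal.coe_add, ← EReal.coe_add]; ring_nf
      _ < g s := by simpa using hgs
  obtain ⟨c, ⟨htc, hcs⟩, hc⟩ := exists_mem_Ico_le_frE hg hg_bot hts hslope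
  exact ⟨c, ⟨(show (0 : ℝ) < t from ht).trans_le htc, hcs.trans hsε⟩, hc⟩

theorem stmt8_general (f : X → EReal)
    (hbot : ∀ x, f x ≠ ⊥)
    (hlsc : LowerSemicontinuous f)
    (xb : X) (u : X)
    (hlim : f xb = Filter.liminf (fun t : ℝ => f (xb + t • u))
      (nhdsWithin 0 (Set.Ioi 0))) :
    frEplus f xb u ≤ fnatE f xb u := by
  have hline : LowerSemicontinuous fun t : ℝ => f (xb + t • u) := hlsc.comp (by fun_prop)
  have hup : frEplus f xb u = frEplus (fun t : ℝ => f (xb + t • u)) 0 1 := by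
    simpa using (frEplus_comp_line f xb u 0).symm
  refine le_iInf₂ fun α _ => EReal.ge_of_forall_gt_iff_ge.1 fun m hm => ?_
  obtain ⟨m₁, hmm₁, hm₁⟩ := EReal.lt_iff_exists_real_btwn.1 hm
  have hmm₁ : m < m₁ := by exact_mod_cast hmm₁
  have hfreq := frequently_le_frE_of_lt_frEplus hline (fun t => hbot _) (by simpa using hlim)
    (hup ▸ hm₁)
  have hscale : Tendsto (fun c : ℝ => 1 - α * c) (𝓝[>] 0) (𝓝 1) :=
    ((continuous_const.sub (continuous_const_mul α)).tendsto' 0 1 (by simp)).mono_left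
      nhdsWithin_le_nhds
  have hev : ∀ᶠ c in 𝓝[>] 0, 0 < 1 - α * c ∧ m < (1 - α * c) * m₁ :=
    (hscale.eventually_const_lt one_pos).and
      ((hscale.mul_const m₁).eventually_const_lt (by simpa using hmm₁))
  refine le_limsup_of_frequently_le ((tendsto_id.prodMk tendsto_const_nhds).frequently
    ((hfreq.and_eventually hev).mono fun c ⟨hc, hpos, hlt⟩ => ?_))
  rw [frE_comp_line] at hc
  show (m : EReal) ≤ frE f (xb + c • u) (u + α • (xb - (xb + c • u)))
  rw [show u + α • (xb - (xb + c • u)) = (1 - α * c) • u by module]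
  exact (EReal.coe_le_coe_iff.2 hlt.le).trans (mul_le_frE_smul hpos hc)

/-- If `f` is proper lsc on a Banach space, `x̄ ∈ dom f`, and
`f(x̄) = liminf_{t↘0} f(x̄ + tu)`, then `f^r₊(x̄;u) ≤ f^♮(x̄;u)`. -/
theorem stmt8 (f : X → EReal)
    (hbot : ∀ x, f x ≠ ⊥) (hproper : ∃ x, f x ≠ ⊤)
    (hlsc : LowerSemicontinuous f)
    (xb : X) (hxb : f xb ≠ ⊤) (u : X)
    (hlim : f xb = Filter.liminf (fun t : ℝ => f (xb + t • u))
      (nhdsWithin 0 (Set.Ioi 0))) :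
    frEplus f xb u ≤ fnatE f xb u :=
  stmt8_general f hbot hlsc xb u hlim
end

section
/- For a proper lower semicontinuous convex function f : X → ℝ ∪ {+∞} on a Banach space, at every x̄ ∈ dom f and u ∈ X one has f^r(x̄;u) = f^♮♮(x̄;u), where f^♮♮(x̄;u) := inf_{α≥0} limsup_{x→x̄} f^r(x; u + α(x̄−x)). -/
open Filter Set Topology

variable {X : Type*} [NormedAddCommGroup X] [NormedSpace ℝ X] [CompleteSpace X]

set_option linter.unusedSectionVars false

/-- Monotonicity of the difference quotients of a convex function. -/
lemma quot_mono (f : X → EReal) (hbot : ∀ x, f x ≠ ⊥)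
    (hconv : ∀ x y : X, ∀ t ∈ Set.Icc (0:ℝ) 1,
      f (t • x + (1 - t) • y) ≤ ((t : ℝ) : EReal) * f x + (((1 - t : ℝ)) : EReal) * f y)
    (x u : X) (c : ℝ) (hc : f x = (c : ℝ)) {s t : ℝ} (hs : 0 < s) (hst : s ≤ t) :
    (f (x + s • u) - (c : EReal)) * (((s⁻¹ : ℝ)) : EReal)
      ≤ (f (x + t • u) - (c : EReal)) * (((t⁻¹ : ℝ)) : EReal) := by
  have ht : 0 < t := hs.trans_le hst
  rcases eq_or_ne (f (x + t • u)) ⊤ with hT | hT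
  · rw [hT, EReal.top_sub_coe, EReal.top_mul_coe_of_pos (inv_pos.2 ht)]
    exact le_top
  lift f (x + t • u) to ℝ using ⟨hT, hbot _⟩ with a ha
  set r : ℝ := s / t with hr
  have hr0 : 0 ≤ r := div_nonneg hs.le ht.le
  have hr1 : r ≤ 1 := (div_le_one ht).2 hst
  have hrts : r * t = s := div_mul_cancel₀ s ht.ne'
  have hpt : r • (x + t • u) + (1 - r) • x = x + s • u := by
    rw [smul_add, smul_smul, hrts]
    module
  have key := hconv (x + t • u) x r ⟨hr0, hr1⟩
  rw [hpt, ← ha, hc, ← EReal.coe_mul, ← EReal.coe_mul, ← EReal.coe_add] at key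
  have hsT : f (x + s • u) ≠ ⊤ := ne_top_of_le_ne_top (EReal.coe_ne_top _) key
  lift f (x + s • u) to ℝ using ⟨hsT, hbot _⟩ with b hb
  rw [EReal.coe_le_coe_iff] at key
  rw [← EReal.coe_sub, ← EReal.coe_sub, ← EReal.coe_mul, ← EReal.coe_mul,
    EReal.coe_le_coe_iff]
  rw [← div_eq_mul_inv, ← div_eq_mul_inv, div_le_div_iff₀ hs ht]
  have h1 : b * t ≤ (r * a + (1 - r) * c) * t := mul_le_mul_of_nonneg_right key ht.le
  have h2 : (r * a + (1 - r) * c) * t = s * a + (t - s) * c := by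
    rw [← hrts]; ring
  linarith

/-- Convexity: the radial subderivative is below every difference quotient. -/
lemma frE_le_quot (f : X → EReal) (hbot : ∀ x, f x ≠ ⊥)
    (hconv : ∀ x y : X, ∀ t ∈ Set.Icc (0:ℝ) 1,
      f (t • x + (1 - t) • y) ≤ ((t : ℝ) : EReal) * f x + (((1 - t : ℝ)) : EReal) * f y)
    (x u : X) (c : ℝ) (hc : f x = (c : ℝ)) {t : ℝ} (ht : 0 < t) :
    frE f x u ≤ (f (x + t • u) - (c : EReal)) * (((t⁻¹ : ℝ)) : EReal) := by
  rw [frE, if_neg (by rw [hc]; exact EReal.coe_ne_top c)]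
  refine Filter.liminf_le_of_frequently_le ?_
  have hev : ∀ᶠ s in nhdsWithin (0:ℝ) (Set.Ioi 0), s ∈ Set.Ioc 0 t :=
    Filter.eventually_of_mem (Ioc_mem_nhdsGT ht) fun s hs => hs
  refine (hev.mono fun s hs => ?_).frequently
  rw [hc]
  exact quot_mono f hbot hconv x u c hc hs.1 hs.2

/-- For a proper lsc convex function on a Banach space, `f^r(x̄;u) = f^♮♮(x̄;u)`
at every point of the domain and in every direction. -/
theorem stmt9 (f : X → EReal)
    (hbot : ∀ x, f x ≠ ⊥) (hproper : ∃ x, f x ≠ ⊤)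
    (hlsc : LowerSemicontinuous f)
    (hconv : ∀ x y : X, ∀ t ∈ Set.Icc (0:ℝ) 1,
      f (t • x + (1 - t) • y) ≤ ((t : ℝ) : EReal) * f x + (((1 - t : ℝ)) : EReal) * f y)
    (xb : X) (hxb : f xb ≠ ⊤) (u : X) :
    frE f xb u = fnatnatE f xb u := by
  lift f xb to ℝ using ⟨hxb, hbot _⟩ with cb hcb
  refine le_antisymm ?_ ?_
  · -- frE ≤ fnatnatE : take x = xb in each limsup
    rw [fnatnatE]
    refine le_iInf fun α => le_iInf fun hα => ?_
    refine Filter.le_limsup_of_frequently_le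
      (Filter.frequently_iff.2 fun {s} hs => ⟨xb, mem_of_mem_nhds hs, ?_⟩)
    simp
  · -- fnatnatE ≤ frE
    have key : ∀ t : ℝ, 0 < t →
        fnatnatE f xb u ≤ (f (xb + t • u) - (cb : EReal)) * (((t⁻¹ : ℝ)) : EReal) := by
      intro t ht
      have hα : (0:ℝ) ≤ t⁻¹ := (inv_pos.2 ht).le
      refine le_trans (iInf₂_le t⁻¹ hα) ?_
      -- pointwise bound for the limsup integrand
      have hpt : ∀ x : X, frE f x (u + t⁻¹ • (xb - x))
          ≤ (f (xb + t • u) - f x) * (((t⁻¹ : ℝ)) : EReal) := by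
        intro x
        rcases eq_or_ne (f x) ⊤ with hx | hx
        · rw [frE, if_pos hx]; exact bot_le
        lift f x to ℝ using ⟨hx, hbot _⟩ with c hcx
        have hmove : x + t • (u + t⁻¹ • (xb - x)) = xb + t • u := by
          rw [smul_add, smul_smul, mul_inv_cancel₀ ht.ne']
          module
        have := frE_le_quot f hbot hconv x (u + t⁻¹ • (xb - x)) c hcx.symm ht
        rwa [hmove] at this
      refine le_trans (Filter.limsup_le_limsup (Filter.Eventually.of_forall hpt)) ?_
      -- limsup of the difference quotient bound
      rcases eq_or_ne (f (xb + t • u)) ⊤ with hT | hT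
      · rw [hT, EReal.top_sub_coe, EReal.top_mul_coe_of_pos (inv_pos.2 ht)]
        exact le_top
      lift f (xb + t • u) to ℝ using ⟨hT, hbot _⟩ with cT hcT
      rw [← EReal.coe_sub, ← EReal.coe_mul]
      by_contra hlt
      push_neg at hlt
      obtain ⟨z, hz1, hz2⟩ := EReal.exists_between_coe_real hlt
      rw [EReal.coe_lt_coe_iff] at hz1
      set ε : ℝ := z - (cT - cb) * t⁻¹ with hε
      have hε0 : 0 < ε := by simp [hε]; linarith
      have hy : ((cb - ε * t : ℝ) : EReal) < f xb := by
        rw [← hcb, EReal.coe_lt_coe_iff]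
        nlinarith
      have hev : ∀ᶠ x in nhds xb, ((cb - ε * t : ℝ) : EReal) < f x := hlsc xb _ hy
      have hub : ∀ᶠ x in nhds xb,
          ((cT : EReal) - f x) * (((t⁻¹ : ℝ)) : EReal) ≤ ((z : ℝ) : EReal) := by
        refine hev.mono fun x hx => ?_
        have h1 : (cT : EReal) - f x ≤ (cT : EReal) - ((cb - ε * t : ℝ) : EReal) :=
          EReal.sub_le_sub le_rfl hx.le
        have h2 := mul_le_mul_of_nonneg_right h1
          (by exact_mod_cast hα : (0:EReal) ≤ ((t⁻¹ : ℝ) : EReal))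
        refine le_trans h2 ?_
        rw [← EReal.coe_sub, ← EReal.coe_mul, EReal.coe_le_coe_iff]
        have : (cT - (cb - ε * t)) * t⁻¹ = (cT - cb) * t⁻¹ + ε := by
          field_simp
          ring
        rw [this, hε]
        linarith
      exact absurd (Filter.limsup_le_of_le (by isBoundedDefault) hub) (not_le.2 hz2)
    -- conclude: fnatnatE ≤ liminf of quotients = frE
    rw [frE, if_neg (show f xb ≠ ⊤ by rw [← hcb]; exact EReal.coe_ne_top cb), ← hcb]
    refine Filter.le_liminf_of_le (by isBoundedDefault) ?_
    refine Filter.eventually_of_mem self_mem_nhdsWithin fun t ht => ?_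
    exact key t ht
end

section
/- For the function f : ℝ → ℝ, f(x) = −|x|, at x̄ = 0 and any u ≠ 0, one has f^♮(0;u) = limsup_{x→_u 0} f^r(x;u) = −|u|, which is strictly less than f^♮♮(0;u) = limsup_{x→0} f^r(x;u) = |u|. -/
open Filter Set Topology

/-!
Away from `0`, `f = -|·|` is differentiable with derivative `-sign x`, so `f^r(x;u) = -sign(x) u`.
Along `x = t v` with `t ↘ 0` and `v → u`, the point `x` has the sign of `u`, giving `-|u|`; points
on the other side of `0` give `|u|`, which is also an upper bound because `f` is `1`-Lipschitz.
-/

/-- Radial subderivative of a real function of a real variable. -/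
noncomputable def frR (f : ℝ → ℝ) (x u : ℝ) : EReal :=
  Filter.liminf (fun t : ℝ => (((f (x + t * u) - f x) / t : ℝ) : EReal))
    (nhdsWithin 0 (Set.Ioi 0))

theorem frR_eq_of_hasDerivAt {f : ℝ → ℝ} {a x : ℝ} (hf : HasDerivAt f a x) (u : ℝ) :
    frR f x u = ((a * u : ℝ) : EReal) := by
  have hline : HasDerivAt (fun t : ℝ => x + t * u) u 0 := by
    simpa using ((hasDerivAt_id (0 : ℝ)).mul_const u).const_add x
  have hcomp : HasDerivAt (fun t => f (x + t * u)) (a * u) 0 := by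
    have hf' : HasDerivAt f a (x + 0 * u) := by simpa using hf
    exact hf'.comp 0 hline
  have hquot : Tendsto (fun t : ℝ => (f (x + t * u) - f x) / t) (𝓝[>] 0) (𝓝 (a * u)) := by
    refine (hcomp.tendsto_slope.mono_left (nhdsWithin_mono _ ?_)).congr ?_
    · exact fun t ht => ne_of_gt ht
    · intro t; simp [slope_def_field]
  exact (continuous_coe_real_ereal.tendsto _ |>.comp hquot).liminf_eq

theorem frR_le_of_lipschitzWith {f : ℝ → ℝ} {K : NNReal} (hf : LipschitzWith K f) (x u : ℝ) :
    frR f x u ≤ ((K * |u| : ℝ) : EReal) := by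
  refine liminf_le_of_frequently_le' (Eventually.frequently ?_)
  filter_upwards [self_mem_nhdsWithin] with t (ht : 0 < t)
  have hdist := hf.dist_le_mul (x + t * u) x
  rw [Real.dist_eq, Real.dist_eq, add_sub_cancel_left, abs_mul, abs_of_pos ht] at hdist
  rw [EReal.coe_le_coe_iff, div_le_iff₀ ht]
  nlinarith [le_abs_self (f (x + t * u) - f x)]

theorem frR_neg_abs {x : ℝ} (hx : x ≠ 0) (u : ℝ) :
    frR (fun y => -|y|) x u = ((-(SignType.sign x : ℝ) * u : ℝ) : EReal) :=
  frR_eq_of_hasDerivAt (hasDerivAt_abs hx).neg u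

theorem frR_neg_abs_of_mul_pos {x u : ℝ} (h : 0 < x * u) :
    frR (fun y => -|y|) x u = ((-|u| : ℝ) : EReal) := by
  rw [frR_neg_abs (left_ne_zero_of_mul h.ne')]
  rcases pos_and_pos_or_neg_and_neg_of_mul_pos h with ⟨hx, hu⟩ | ⟨hx, hu⟩ <;>
    simp [hx, hu, abs_of_pos, abs_of_neg]

theorem frR_neg_abs_of_mul_neg {x u : ℝ} (h : x * u < 0) :
    frR (fun y => -|y|) x u = ((|u| : ℝ) : EReal) := by
  rw [frR_neg_abs (left_ne_zero_of_mul h.ne)]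
  rcases mul_neg_iff.1 h with ⟨hx, hu⟩ | ⟨hx, hu⟩ <;>
    simp [hx, hu, abs_of_pos, abs_of_neg]

theorem frequently_mul_neg_nhds_zero {u : ℝ} (hu : u ≠ 0) : ∃ᶠ x in 𝓝 (0 : ℝ), x * u < 0 := by
  rcases hu.lt_or_gt with hu | hu
  · exact (frequently_gt_nhds (0 : ℝ)).mono fun x hx => mul_neg_of_pos_of_neg hx hu
  · exact (frequently_lt_nhds (0 : ℝ)).mono fun x hx => mul_neg_of_neg_of_pos hx hu

/-- For `f(x) = -|x|`, at `x̄ = 0` and `u ≠ 0`: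
`f^♮(0;u) = limsup_{x →_u 0} f^r(x;u) = -|u|` is strictly smaller than
`f^♮♮(0;u) = limsup_{x → 0} f^r(x;u) = |u|`. Here `x →_u 0` means `x = t v`
with `t ↘ 0` and `v → u`. -/
theorem stmt10 (f : ℝ → ℝ) (hf : ∀ x : ℝ, f x = -|x|) (u : ℝ) (hu : u ≠ 0) :
    Filter.limsup (fun p : ℝ × ℝ => frR f (p.1 * p.2) u)
        ((nhdsWithin 0 (Set.Ioi 0)) ×ˢ nhds u) = ((-|u| : ℝ) : EReal) ∧
    Filter.limsup (fun x : ℝ => frR f x u) (nhds 0) = ((|u| : ℝ) : EReal) ∧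
    ((-|u| : ℝ) : EReal) < ((|u| : ℝ) : EReal) := by
  obtain rfl : f = fun y => -|y| := funext hf
  have hdir : ∀ᶠ v in 𝓝 u, 0 < v * u :=
    ((continuous_mul_const u).tendsto u).eventually_const_lt (mul_self_pos.2 hu)
  have hradial : ∀ᶠ p : ℝ × ℝ in 𝓝[>] 0 ×ˢ 𝓝 u,
      frR (fun y => -|y|) (p.1 * p.2) u = ((-|u| : ℝ) : EReal) := by
    filter_upwards [prod_mem_prod self_mem_nhdsWithin hdir] with p ⟨(ht : 0 < p.1), hv⟩
    exact frR_neg_abs_of_mul_pos (by rw [mul_assoc]; exact mul_pos ht hv)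
  refine ⟨by rw [limsup_congr hradial, limsup_const], le_antisymm ?_ ?_, ?_⟩
  · refine limsup_le_of_le (by isBoundedDefault) (Eventually.of_forall fun x => ?_)
    have hlip : LipschitzWith 1 (fun y : ℝ => -|y|) := lipschitzWith_one_norm.neg
    simpa using frR_le_of_lipschitzWith hlip x u
  · refine le_limsup_of_frequently_le ?_ (by isBoundedDefault)
    exact (frequently_mul_neg_nhds_zero hu).mono fun x hx => (frR_neg_abs_of_mul_neg hx).ge
  · exact_mod_cast neg_lt_self (abs_pos.2 hu)
end

section
/- Let g : X → ℝ ∪ {+∞} be lower semicontinuous with convex domain on a Banach space, and suppose that for every segment [x̄, x̄+u] ⊂ dom g and every x in the open segment (x̄, x̄+u), g^r(x;v) is bounded above by some λ for v = u and v = −u at all points of a subsegment (x−t₀u, x+t₀u). Then for any two points y, z ∈ (x−t₀u, x+t₀u), g(z) − g(y) ≤ (λ/‖u‖)·‖z−y‖. -/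
open Filter Set Topology

variable {X : Type*} [NormedAddCommGroup X] [NormedSpace ℝ X] [CompleteSpace X]

set_option linter.unusedSectionVars false

lemma key_lip (φ : ℝ → EReal) (hbot : ∀ t, φ t ≠ ⊥) (hlsc : LowerSemicontinuous φ)
    (a b : ℝ) (hab : a ≤ b) (lam : ℝ) (hA : φ a ≠ ⊤)
    (hD : ∀ t ∈ Set.Ico a b, φ t ≠ ⊤ →
      Filter.liminf (fun h : ℝ => (φ (t + h) - φ t) * (((h⁻¹ : ℝ)) : EReal))
        (nhdsWithin 0 (Set.Ioi 0)) ≤ ((lam : ℝ) : EReal)) :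
    φ b ≤ φ a + ((lam * (b - a) : ℝ) : EReal) := by
  set A : ℝ := (φ a).toReal with hAdef
  have hAe : φ a = (A : EReal) := (EReal.coe_toReal hA (hbot a)).symm
  -- Step 1: for every ε > 0
  have step1 : ∀ ε : ℝ, 0 < ε → φ b ≤ ((A + (lam + ε) * (b - a) : ℝ) : EReal) := by
    intro ε hε
    set S : Set ℝ := {t | t ∈ Set.Icc a b ∧ φ t ≤ ((A + (lam + ε) * (t - a) : ℝ) : EReal)} with hS
    have haS : a ∈ S := by
      refine ⟨⟨le_refl a, hab⟩, ?_⟩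
      rw [hAe]
      exact_mod_cast (by ring_nf; exact le_refl A : A ≤ A + (lam + ε) * (a - a))
    have hne : S.Nonempty := ⟨a, haS⟩
    have hbdd : BddAbove S := ⟨b, fun t ht => ht.1.2⟩
    set c : ℝ := sSup S with hc
    have hac : a ≤ c := le_csSup hbdd haS
    have hcb : c ≤ b := csSup_le hne fun t ht => ht.1.2
    -- c ∈ S by lower semicontinuity
    have hcS : c ∈ S := by
      refine ⟨⟨hac, hcb⟩, ?_⟩
      by_contra hcon
      push_neg at hcon
      obtain ⟨y, hy1, hy2⟩ := EReal.exists_between_coe_real hcon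
      have hev1 : ∀ᶠ t in 𝓝 c, (y : EReal) < φ t := hlsc c _ hy2
      have hev2 : ∀ᶠ t in 𝓝 c, A + (lam + ε) * (t - a) < y := by
        have hcont : ContinuousAt (fun t : ℝ => A + (lam + ε) * (t - a)) c := by fun_prop
        have := hcont.eventually_lt continuousAt_const (by exact_mod_cast hy1)
        exact this
      have hev : ∀ᶠ t in 𝓝 c, t ∉ S := by
        filter_upwards [hev1, hev2] with t h1 h2 ht
        have : φ t ≤ ((A + (lam + ε) * (t - a) : ℝ) : EReal) := ht.2
        have : (y : EReal) < ((A + (lam + ε) * (t - a) : ℝ) : EReal) := lt_of_lt_of_le h1 this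
        exact absurd (by exact_mod_cast this) (not_lt.mpr h2.le)
      rw [Metric.eventually_nhds_iff] at hev
      obtain ⟨δ, hδ, hball⟩ := hev
      obtain ⟨t, htS, htgt⟩ := exists_lt_of_lt_csSup hne (show c - δ < c by linarith)
      have htle : t ≤ c := le_csSup hbdd htS
      exact hball (show dist t c < δ by rw [Real.dist_eq]; rw [abs_lt]; constructor <;> linarith) htS
    -- c = b
    have hceq : c = b := by
      by_contra hne'
      have hclt : c < b := lt_of_le_of_ne hcb hne'
      have hφc_ne : φ c ≠ ⊤ := by
        intro h
        have h2 := hcS.2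
        rw [h] at h2
        exact EReal.coe_ne_top _ (top_le_iff.mp h2)
      set C : ℝ := (φ c).toReal with hCdef
      have hCe : φ c = (C : EReal) := (EReal.coe_toReal hφc_ne (hbot c)).symm
      have hlim := hD c ⟨hac, hclt⟩ hφc_ne
      have hlt : Filter.liminf (fun h : ℝ => (φ (c + h) - φ c) * (((h⁻¹ : ℝ)) : EReal))
          (nhdsWithin 0 (Set.Ioi 0)) < ((lam + ε : ℝ) : EReal) :=
        lt_of_le_of_lt hlim (by exact_mod_cast lt_add_of_pos_right lam hε)
      have hfreq := Filter.frequently_lt_of_liminf_lt (by isBoundedDefault) hlt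
      have hev2 : ∀ᶠ h in nhdsWithin (0:ℝ) (Set.Ioi 0), 0 < h ∧ h < b - c := by
        have h1 : ∀ᶠ h in nhdsWithin (0:ℝ) (Set.Ioi 0), h ∈ Set.Ioi (0:ℝ) :=
          eventually_mem_nhdsWithin
        have h2 : ∀ᶠ h in 𝓝 (0:ℝ), h < b - c := eventually_lt_nhds (by linarith)
        filter_upwards [h1, h2.filter_mono nhdsWithin_le_nhds] with h hh1 hh2
        exact ⟨hh1, hh2⟩
      obtain ⟨h, hfh, hh0, hhb⟩ := (hfreq.and_eventually hev2).exists
      -- φ (c+h) is finite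
      have hch_ne : φ (c + h) ≠ ⊤ := by
        intro htop
        rw [htop, hCe, EReal.top_sub_coe, EReal.top_mul_coe_of_pos (inv_pos.2 hh0)] at hfh
        exact not_top_lt hfh
      set D : ℝ := (φ (c + h)).toReal with hDdef
      have hDe : φ (c + h) = (D : EReal) := (EReal.coe_toReal hch_ne (hbot _)).symm
      rw [hDe, hCe, ← EReal.coe_sub, ← EReal.coe_mul] at hfh
      have hreal : (D - C) * h⁻¹ < lam + ε := by exact_mod_cast hfh
      have hDC : D - C < (lam + ε) * h := by
        rw [← div_eq_mul_inv] at hreal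
        calc D - C = ((D - C) / h) * h := by field_simp
          _ < (lam + ε) * h := by exact mul_lt_mul_of_pos_right hreal hh0
      have hCb : C ≤ A + (lam + ε) * (c - a) := by
        have := hcS.2; rw [hCe] at this; exact_mod_cast this
      have hchS : c + h ∈ S := by
        refine ⟨⟨by linarith, by linarith⟩, ?_⟩
        rw [hDe]
        exact_mod_cast (by nlinarith : D ≤ A + (lam + ε) * (c + h - a))
      have := le_csSup hbdd hchS
      linarith
    rw [← hceq]
    exact hcS.2
  -- Step 2: pass to the limit ε → 0
  have hb_ne : φ b ≠ ⊤ := by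
    intro h
    have := step1 1 one_pos
    rw [h] at this
    exact EReal.coe_ne_top _ (top_le_iff.mp this)
  set B : ℝ := (φ b).toReal with hBdef
  have hBe : φ b = (B : EReal) := (EReal.coe_toReal hb_ne (hbot b)).symm
  have hreal : ∀ ε : ℝ, 0 < ε → B ≤ A + (lam + ε) * (b - a) := by
    intro ε hε
    have := step1 ε hε
    rw [hBe] at this
    exact_mod_cast this
  have hfinal : B ≤ A + lam * (b - a) := by
    by_contra hcon
    push_neg at hcon
    rcases eq_or_lt_of_le hab with heq | hlt
    · have := hreal 1 one_pos
      rw [← heq] at hcon this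
      simp at hcon this
      linarith
    · set ε := (B - A - lam * (b - a)) / (2 * (b - a)) with hεdef
      have hε : 0 < ε := by
        apply div_pos
        · linarith
        · linarith
      have hba : b - a ≠ 0 := ne_of_gt (by linarith)
      have := hreal ε hε
      have hbs : ε * (b - a) = (B - A - lam * (b - a)) / 2 := by
        rw [hεdef]
        field_simp
      have h3 : (lam + ε) * (b - a) = lam * (b - a) + ε * (b - a) := by ring
      rw [h3, hbs] at this
      linarith
  rw [hBe, hAe, ← EReal.coe_add]
  exact_mod_cast hfinal

lemma frE_le_imp (g : X → EReal) (p v : X) (lam : ℝ)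
    (h : frE g p v ≤ ((lam : ℝ) : EReal)) (hft : g p ≠ ⊤) :
    Filter.liminf (fun t : ℝ => (g (p + t • v) - g p) * (((t⁻¹ : ℝ)) : EReal))
      (nhdsWithin 0 (Set.Ioi 0)) ≤ ((lam : ℝ) : EReal) := by
  rw [frE, if_neg hft] at h; exact h

lemma hfin_of_le (w : EReal) (q : ℝ) (z : EReal) (hzt : z ≠ ⊤) (hzb : z ≠ ⊥)
    (hle : w ≤ z + ((q : ℝ) : EReal)) : w ≠ ⊤ := by
  intro htop
  rw [htop] at hle
  lift z to ℝ using ⟨hzt, hzb⟩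
  rw [← EReal.coe_add] at hle
  exact EReal.coe_ne_top _ (top_le_iff.mp hle)

/-- Key Lipschitz estimate: let `g` be lsc, never `-∞`, with the segment
`[x̄, x̄ + u] ⊂ dom g`, let `x = x̄ + τu` with `τ ∈ (0,1)`, and suppose that
`g^r(x';v) ≤ λ` for `v = u` and `v = -u` at all points `x'` of the subsegment
`(x - t₀u, x + t₀u)`. Then for any two points `y, z` of this subsegment,
`g(z) - g(y) ≤ (λ/‖u‖)·‖z - y‖`. -/
theorem stmt11 (g : X → EReal)
    (hbot : ∀ x, g x ≠ ⊥) (hlsc : LowerSemicontinuous g)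
    (xb u : X) (hu : u ≠ 0)
    (hseg : ∀ t ∈ Set.Icc (0:ℝ) 1, g (xb + t • u) ≠ ⊤)
    (τ : ℝ) (hτ : τ ∈ Set.Ioo (0:ℝ) 1) (x : X) (hx : x = xb + τ • u)
    (t₀ : ℝ) (ht₀ : 0 < t₀) (lam : ℝ)
    (hbound : ∀ s : ℝ, |s| < t₀ →
      frE g (x + s • u) u ≤ ((lam : ℝ) : EReal) ∧
      frE g (x + s • u) (-u) ≤ ((lam : ℝ) : EReal)) :
    ∀ s r : ℝ, |s| < t₀ → |r| < t₀ →
      g (x + r • u) - g (x + s • u) ≤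
        ((lam / ‖u‖ * ‖(x + r • u) - (x + s • u)‖ : ℝ) : EReal) := by
  have hcomp : ∀ v : X, LowerSemicontinuous (fun t : ℝ => g (x + t • v)) := by
    intro v
    intro t y hy
    have hc : Continuous (fun t : ℝ => x + t • v) := by continuity
    exact (hc.tendsto t).eventually (hlsc (x + t • v) y hy)
  -- forward estimate
  have hkey : ∀ a b : ℝ, a ≤ b → -t₀ < a → b < t₀ → g (x + a • u) ≠ ⊤ →
      g (x + b • u) ≤ g (x + a • u) + ((lam * (b - a) : ℝ) : EReal) := by
    intro a b hab ha hb hA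
    exact key_lip (fun t => g (x + t • u)) (fun t => hbot _) (hcomp u) a b hab lam hA
      (by
        intro t ht hft
        have habs : |t| < t₀ := abs_lt.2 ⟨by linarith [ht.1], by linarith [ht.2]⟩
        have hb' := frE_le_imp g (x + t • u) u lam (hbound t habs).1 hft
        show Filter.liminf
          (fun h : ℝ => (g (x + (t + h) • u) - g (x + t • u)) * (((h⁻¹ : ℝ)) : EReal))
          (nhdsWithin 0 (Set.Ioi 0)) ≤ ((lam : ℝ) : EReal)
        have heq : (fun h : ℝ => (g (x + (t + h) • u) - g (x + t • u)) * (((h⁻¹ : ℝ)) : EReal))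
            = (fun h : ℝ => (g ((x + t • u) + h • u) - g (x + t • u)) * (((h⁻¹ : ℝ)) : EReal)) := by
          funext h'
          rw [add_smul, add_assoc]
        rw [heq]; exact hb')
  -- backward estimate
  have hkey' : ∀ a b : ℝ, a ≤ b → -t₀ < a → b < t₀ → g (x + b • u) ≠ ⊤ →
      g (x + a • u) ≤ g (x + b • u) + ((lam * (b - a) : ℝ) : EReal) := by
    intro a b hab ha hb hB
    have e : ∀ c : ℝ, x + c • (-u) = x + (-c) • u := by
      intro c; rw [smul_neg, ← neg_smul]
    have hB' : g (x + (-b) • (-u)) ≠ ⊤ := by rw [e, neg_neg]; exact hB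
    have := key_lip (fun t => g (x + t • (-u))) (fun t => hbot _) (hcomp (-u))
      (-b) (-a) (by linarith) lam hB'
      (by
        intro t ht hft
        have habs : |(-t)| < t₀ := abs_lt.2 ⟨by linarith [ht.2], by linarith [ht.1]⟩
        have hft' : g ((x + (-t) • u)) ≠ ⊤ := by rw [← e t]; exact hft
        have hb' := frE_le_imp g (x + (-t) • u) (-u) lam (hbound (-t) habs).2 hft'
        show Filter.liminf
          (fun h : ℝ => (g (x + (t + h) • (-u)) - g (x + t • (-u))) * (((h⁻¹ : ℝ)) : EReal))
          (nhdsWithin 0 (Set.Ioi 0)) ≤ ((lam : ℝ) : EReal)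
        have heq : (fun h : ℝ => (g (x + (t + h) • (-u)) - g (x + t • (-u))) * (((h⁻¹ : ℝ)) : EReal))
            = (fun h : ℝ => (g ((x + (-t) • u) + h • (-u)) - g (x + (-t) • u)) * (((h⁻¹ : ℝ)) : EReal)) := by
          funext h'
          rw [add_smul, ← add_assoc, smul_neg t u, ← neg_smul t u]
        rw [heq]; exact hb'
        )
    simp only [e, neg_neg] at this
    have harith : lam * (-a - -b) = lam * (b - a) := by ring
    rwa [harith] at this
  -- finiteness at the base point
  have h0 : g (x + (0:ℝ) • u) ≠ ⊤ := by
    rw [zero_smul, add_zero, hx]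
    exact hseg τ ⟨le_of_lt hτ.1, le_of_lt hτ.2⟩
  intro s r hs hr
  obtain ⟨hs1, hs2⟩ := abs_lt.1 hs
  obtain ⟨hr1, hr2⟩ := abs_lt.1 hr
  have hsfin : g (x + s • u) ≠ ⊤ := by
    rcases le_or_gt 0 s with h0s | h0s
    · exact hfin_of_le _ _ _ h0 (hbot _) (hkey 0 s h0s (by linarith) hs2 h0)
    · exact hfin_of_le _ _ _ h0 (hbot _) (hkey' s 0 (le_of_lt h0s) hs1 (by linarith) h0)
  have hmain : g (x + r • u) ≤ g (x + s • u) + ((lam * |r - s| : ℝ) : EReal) := by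
    rcases le_or_gt s r with hsr | hsr
    · have := hkey s r hsr hs1 hr2 hsfin
      rwa [abs_of_nonneg (by linarith : (0:ℝ) ≤ r - s)]
    · have := hkey' r s (le_of_lt hsr) hr1 hs2 hsfin
      rwa [abs_sub_comm, abs_of_nonneg (by linarith : (0:ℝ) ≤ s - r)]
  have hrfin : g (x + r • u) ≠ ⊤ := hfin_of_le _ _ _ hsfin (hbot _) hmain
  have hcoef : lam / ‖u‖ * ‖(x + r • u) - (x + s • u)‖ = lam * |r - s| := by
    have hvec : (x + r • u) - (x + s • u) = (r - s) • u := by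
      rw [sub_smul]; abel
    rw [hvec, norm_smul, Real.norm_eq_abs]
    have hn : ‖u‖ ≠ 0 := norm_ne_zero_iff.2 hu
    field_simp
  rw [hcoef]
  set R : ℝ := (g (x + r • u)).toReal with hR
  set B : ℝ := (g (x + s • u)).toReal with hB
  have hRe : g (x + r • u) = (R : EReal) := (EReal.coe_toReal hrfin (hbot _)).symm
  have hBe : g (x + s • u) = (B : EReal) := (EReal.coe_toReal hsfin (hbot _)).symm
  rw [hRe, hBe, ← EReal.coe_sub]
  rw [hRe, hBe, ← EReal.coe_add] at hmain
  have : R ≤ B + lam * |r - s| := by exact_mod_cast hmain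
  exact_mod_cast (by linarith : R - B ≤ lam * |r - s|)
end

section
/- Let g : X → ℝ ∪ {+∞} be lower semicontinuous on a Banach space X with convex domain, and suppose that for every line segment [x̄, x̄+u] ⊂ dom g and every point x_t = x̄+tu with t ∈ [0,1), g^r(x_t;u) < +∞ and g^♮♮(x_t;u) = g^r(x_t;u). Then the restriction of g to any line segment [x̄, x̄+u] ⊂ dom g is continuous at the endpoints and locally Lipschitz at every point of the open segment (x̄, x̄+u); in particular g^r(x;u) is finite for all x ∈ (x̄, x̄+u). -/
open Filter Set Topology

variable {X : Type*} [NormedAddCommGroup X] [NormedSpace ℝ X] [CompleteSpace X]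

set_option linter.unusedSectionVars false
set_option maxHeartbeats 1000000


noncomputable def mulLeftOrderIso (c : ℝ) (hc : 0 < c) : EReal ≃o EReal where
  toFun a := (c : EReal) * a
  invFun a := ((c⁻¹ : ℝ) : EReal) * a
  left_inv a := by
    show ((c⁻¹:ℝ) : EReal) * ((c : EReal) * a) = a
    rw [← mul_assoc, ← EReal.coe_mul, inv_mul_cancel₀ hc.ne', EReal.coe_one, one_mul]
  right_inv a := by
    show ((c:ℝ) : EReal) * (((c⁻¹:ℝ) : EReal) * a) = a
    rw [← mul_assoc, ← EReal.coe_mul, mul_inv_cancel₀ hc.ne', EReal.coe_one, one_mul]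
  map_rel_iff' := by
    intro a b
    simp only [Equiv.coe_fn_mk]
    constructor
    · intro h
      have h2 := mul_le_mul_of_nonneg_left h
        (by exact_mod_cast (inv_pos.2 hc).le : (0:EReal) ≤ ((c⁻¹:ℝ):EReal))
      rwa [← mul_assoc, ← mul_assoc, ← EReal.coe_mul, inv_mul_cancel₀ hc.ne',
        EReal.coe_one, one_mul, one_mul] at h2
    · intro h
      exact mul_le_mul_of_nonneg_left h (by exact_mod_cast hc.le)

lemma liminf_coe_mul {α : Type*} (F : Filter α) (c : ℝ) (hc : 0 < c) (f : α → EReal) :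
    Filter.liminf (fun i => (c : EReal) * f i) F = (c : EReal) * Filter.liminf f F :=
  ((mulLeftOrderIso c hc).liminf_apply).symm

lemma liminf_map' {α β : Type*} (m : α → β) (F : Filter α) (f : β → EReal) :
    Filter.liminf f (Filter.map m F) = Filter.liminf (fun a => f (m a)) F := by
  unfold Filter.liminf
  rw [Filter.map_map]
  rfl

lemma tendsto_mul_nhdsGT (d : ℝ) (hd : 0 < d) :
    Filter.Tendsto (fun t : ℝ => d * t) (nhdsWithin 0 (Set.Ioi 0)) (nhdsWithin 0 (Set.Ioi 0)) := by
  apply tendsto_nhdsWithin_of_tendsto_nhds_of_eventually_within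
  · have h1 : Filter.Tendsto (fun t : ℝ => d * t) (nhds 0) (nhds (d * 0)) :=
      (continuous_const.mul continuous_id).tendsto (0:ℝ)
    rw [mul_zero] at h1
    exact h1.mono_left nhdsWithin_le_nhds
  · filter_upwards [self_mem_nhdsWithin] with t ht
    exact mul_pos hd ht

lemma map_mul_nhdsGT (c : ℝ) (hc : 0 < c) :
    Filter.map (fun t : ℝ => c * t) (nhdsWithin 0 (Set.Ioi 0)) = nhdsWithin 0 (Set.Ioi 0) := by
  refine le_antisymm (tendsto_mul_nhdsGT c hc) ?_
  have h2 := Filter.map_mono (m := fun t : ℝ => c * t) (tendsto_mul_nhdsGT c⁻¹ (inv_pos.2 hc))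
  rw [Filter.map_map] at h2
  have h3 : ((fun t : ℝ => c * t) ∘ fun t : ℝ => c⁻¹ * t) = id := by
    funext t; simp [← mul_assoc, mul_inv_cancel₀ hc.ne']
  rwa [h3, Filter.map_id] at h2
lemma frE_smul (g : X → EReal) (x u : X) (c : ℝ) (hc : 0 < c) :
    frE g x (c • u) = (c : EReal) * frE g x u := by
  unfold frE
  by_cases h : g x = ⊤
  · rw [if_pos h, if_pos h, EReal.mul_bot_of_pos (by exact_mod_cast hc)]
  rw [if_neg h, if_neg h]
  conv_lhs => rw [← map_mul_nhdsGT c⁻¹ (inv_pos.2 hc), liminf_map']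
  rw [← liminf_coe_mul _ c hc]
  congr 1
  funext t
  have h1 : (c⁻¹ * t) • (c • u) = t • u := by
    rw [smul_smul, mul_comm c⁻¹ t, mul_assoc, inv_mul_cancel₀ hc.ne', mul_one]
  have h2 : ((c⁻¹ * t)⁻¹ : ℝ) = c * t⁻¹ := by
    rw [mul_inv, inv_inv]
  rw [h1, h2, EReal.coe_mul, ← mul_assoc, mul_comm _ ((c:ℝ):EReal), mul_assoc]


lemma mulLeftOrderIso_apply (c : ℝ) (hc : 0 < c) (a : EReal) :
    mulLeftOrderIso c hc a = (c : EReal) * a := rfl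

lemma stepA (g : X → EReal) (xb u : X) (t : ℝ)
    (hfr : frE g (xb + t • u) u ≠ ⊤)
    (heq : fnatnatE g (xb + t • u) u = frE g (xb + t • u) u) :
    ∃ δ > (0:ℝ), ∃ M : ℝ, ∀ s : ℝ, |s - t| < δ → frE g (xb + s • u) u < (M : EReal) := by
  obtain ⟨c, hcL⟩ : ∃ c : ℝ, frE g (xb + t • u) u < (c : EReal) := by
    rcases eq_or_ne (frE g (xb + t • u) u) ⊥ with h | h
    · exact ⟨0, h ▸ EReal.bot_lt_coe 0⟩
    · refine ⟨(frE g (xb + t • u) u).toReal + 1, ?_⟩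
      conv_lhs => rw [← EReal.coe_toReal hfr h]
      exact_mod_cast lt_add_one _
  have h1 : fnatnatE g (xb + t • u) u < (c : EReal) := by rw [heq]; exact hcL
  obtain ⟨α, hα, hlim⟩ : ∃ α : ℝ, 0 ≤ α ∧ Filter.limsup
      (fun x : X => frE g x (u + α • ((xb + t • u) - x))) (nhds (xb + t • u)) < (c : EReal) := by
    unfold fnatnatE at h1
    rw [iInf_lt_iff] at h1
    obtain ⟨α, h1⟩ := h1
    rw [iInf_lt_iff] at h1
    obtain ⟨hα, h1⟩ := h1
    exact ⟨α, hα, h1⟩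
  have hev : ∀ᶠ x in nhds (xb + t • u), frE g x (u + α • ((xb + t • u) - x)) < (c : EReal) :=
    Filter.eventually_lt_of_limsup_lt hlim
  have hcont : Filter.Tendsto (fun s : ℝ => xb + s • u) (nhds t) (nhds (xb + t • u)) :=
    ((continuous_const.add (continuous_id.smul continuous_const)).tendsto t)
  have hev2 : ∀ᶠ s in nhds t,
      frE g (xb + s • u) (u + α • ((xb + t • u) - (xb + s • u))) < (c : EReal) :=
    hcont.eventually hev
  obtain ⟨δ₁, hδ₁, hball⟩ := Metric.eventually_nhds_iff.mp hev2
  refine ⟨min δ₁ (1 / (2 * (α + 1))), lt_min hδ₁ (by positivity), 2 * |c| + 1, ?_⟩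
  intro s hs
  have hs1 : |s - t| < δ₁ := lt_of_lt_of_le hs (min_le_left _ _)
  have hs2 : |s - t| < 1 / (2 * (α + 1)) := lt_of_lt_of_le hs (min_le_right _ _)
  set κ : ℝ := 1 + α * (t - s) with hκdef
  have hdir : u + α • ((xb + t • u) - (xb + s • u)) = κ • u := by
    rw [hκdef]
    module
  have habs : |α * (t - s)| ≤ 1 / 2 := by
    rw [abs_mul, abs_of_nonneg hα, abs_sub_comm]
    calc α * |s - t| ≤ α * (1 / (2 * (α + 1))) := by
          apply mul_le_mul_of_nonneg_left hs2.le hα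
      _ ≤ 1 / 2 := by
          rw [mul_one_div, div_le_div_iff₀ (by positivity) (by norm_num)]
          nlinarith
  have hκpos : (0:ℝ) < κ := by
    have := (abs_le.1 habs).1
    rw [hκdef]; linarith
  have hκhalf : (1:ℝ)/2 ≤ κ := by
    have := (abs_le.1 habs).1
    rw [hκdef]; linarith
  have key : frE g (xb + s • u) (κ • u) < (c : EReal) := by
    have := hball (by rw [Real.dist_eq]; exact hs1)
    rwa [hdir] at this
  rw [frE_smul _ _ _ _ hκpos] at key
  have key2 : frE g (xb + s • u) u < ((κ⁻¹ * c : ℝ) : EReal) := by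
    rw [← (mulLeftOrderIso κ hκpos).lt_iff_lt, mulLeftOrderIso_apply, mulLeftOrderIso_apply]
    calc (κ : EReal) * frE g (xb + s • u) u < (c : EReal) := key
      _ = (κ : EReal) * ((κ⁻¹ * c : ℝ) : EReal) := by
          rw [← EReal.coe_mul, ← mul_assoc, mul_inv_cancel₀ hκpos.ne', one_mul]
  refine lt_of_lt_of_le key2 ?_
  rw [EReal.coe_le_coe_iff]
  have hκinv : κ⁻¹ ≤ 2 := by
    rw [inv_le_comm₀ hκpos (by norm_num)]
    linarith
  have hκinvpos : (0:ℝ) < κ⁻¹ := inv_pos.2 hκpos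
  calc κ⁻¹ * c ≤ κ⁻¹ * |c| := by
        apply mul_le_mul_of_nonneg_left (le_abs_self c) hκinvpos.le
    _ ≤ 2 * |c| := by
        apply mul_le_mul_of_nonneg_right hκinv (abs_nonneg c)
    _ ≤ 2 * |c| + 1 := by linarith

lemma mvt (g : X → EReal) (hlsc : LowerSemicontinuous g) (hbot : ∀ x, g x ≠ ⊥)
    (xb' u' : X) (a b M : ℝ) (hab : a ≤ b)
    (hfin : ∀ s ∈ Set.Icc a b, g (xb' + s • u') ≠ ⊤)
    (hder : ∀ s ∈ Set.Ico a b, frE g (xb' + s • u') u' < (M : EReal)) :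
    (g (xb' + b • u')).toReal ≤ (g (xb' + a • u')).toReal + M * (b - a) := by
  set f : ℝ → ℝ := fun s => (g (xb' + s • u')).toReal with hf
  have hcoe : ∀ s ∈ Set.Icc a b, g (xb' + s • u') = ((f s : ℝ) : EReal) := fun s hs =>
    (EReal.coe_toReal (hfin s hs) (hbot _)).symm
  have hcont : ∀ (c : ℝ), Filter.Tendsto (fun s : ℝ => xb' + s • u') (nhds c)
      (nhds (xb' + c • u')) := fun c =>
    ((continuous_const.add (continuous_id.smul continuous_const)).tendsto c)
  set A : Set ℝ := {x | x ∈ Set.Icc a b ∧ f x ≤ f a + M * (x - a)} with hA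
  have hane : a ∈ A := ⟨⟨le_refl a, hab⟩, by simp⟩
  have hAne : A.Nonempty := ⟨a, hane⟩
  have hbdd : BddAbove A := ⟨b, fun x hx => hx.1.2⟩
  set c := sSup A with hc
  have hac : a ≤ c := le_csSup hbdd hane
  have hcb : c ≤ b := csSup_le hAne (fun x hx => hx.1.2)
  have hcIcc : c ∈ Set.Icc a b := ⟨hac, hcb⟩
  have step1 : ∀ ε > (0:ℝ), f c ≤ f a + M * (c - a) + ε := by
    intro ε hε
    by_contra hcon
    push_neg at hcon
    have hy : ((f a + M * (c - a) + ε : ℝ) : EReal) < g (xb' + c • u') := by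
      rw [hcoe c hcIcc]; exact_mod_cast hcon
    have hev := hlsc (xb' + c • u') _ hy
    have hev2 : ∀ᶠ s in nhds c, ((f a + M * (c - a) + ε : ℝ) : EReal) < g (xb' + s • u') :=
      (hcont c).eventually hev
    obtain ⟨δ, hδ, hb2⟩ := Metric.eventually_nhds_iff.mp hev2
    set δ' := min δ (ε / (|M| + 1)) with hδ'def
    have hδ' : 0 < δ' := lt_min hδ (by positivity)
    obtain ⟨x, hxA, hxgt⟩ := exists_lt_of_lt_csSup hAne (by linarith : c - δ' < sSup A)
    have hxc : x ≤ c := le_csSup hbdd hxA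
    have hlt : f a + M * (c - a) + ε < f x := by
      have hdist : dist x c < δ := by
        rw [Real.dist_eq, abs_of_nonpos (by linarith)]
        have : δ' ≤ δ := min_le_left _ _
        linarith
      have h5 := hb2 hdist
      rw [hcoe x hxA.1] at h5
      exact_mod_cast h5
    have hle : f x ≤ f a + M * (x - a) := hxA.2
    have hkey : δ' * (|M| + 1) ≤ ε := by
      rw [← le_div_iff₀ (by positivity : (0:ℝ) < |M| + 1)]
      exact min_le_right _ _
    have habs : M * (x - c) ≤ |M| * (c - x) := by
      nlinarith [neg_abs_le M, le_abs_self M, sub_nonneg.2 hxc]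
    nlinarith [abs_nonneg M]
  have hcA : c ∈ A := ⟨hcIcc, le_of_forall_pos_le_add step1⟩
  have step3 : c = b := by
    by_contra hne
    have hcb' : c < b := lt_of_le_of_ne hcb hne
    have hder' := hder c ⟨hac, hcb'⟩
    rw [frE, if_neg (hfin c hcIcc)] at hder'
    have hfreq := Filter.frequently_lt_of_liminf_lt (h := hder')
    have hev3 : ∀ᶠ τ in nhdsWithin (0:ℝ) (Set.Ioi 0), τ ∈ Set.Ioo 0 (b - c) :=
      Ioo_mem_nhdsGT_of_mem ⟨le_refl 0, by linarith⟩
    obtain ⟨τ, hτq, hτoo⟩ := (hfreq.and_eventually hev3).exists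
    have hpt : (xb' + c • u') + τ • u' = xb' + (c + τ) • u' := by
      rw [add_smul, ← add_assoc]
    have hctIcc : (c + τ) ∈ Set.Icc a b := ⟨by linarith [hτoo.1], by linarith [hτoo.2]⟩
    rw [hpt, hcoe _ hctIcc, hcoe c hcIcc] at hτq
    have hτpos : 0 < τ := hτoo.1
    have hreal : (f (c + τ) - f c) * τ⁻¹ < M := by exact_mod_cast hτq
    have hq2 : f (c + τ) - f c < M * τ := by
      rw [← div_eq_mul_inv, div_lt_iff₀ hτpos] at hreal
      linarith [hreal]
    have hmem : (c + τ) ∈ A := ⟨hctIcc, by nlinarith [hcA.2]⟩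
    have := le_csSup hbdd hmem
    linarith
  rw [← step3]
  exact hcA.2.trans (by rw [step3])
set_option maxHeartbeats 1000000 in
/-- Radial Lipschitz continuity of functions in `Lsc^♮♮(X)`: if `g` is lsc,
never `-∞`, with convex domain, and on every segment `[x̄, x̄+u] ⊂ dom g` one has
`g^r(x_t;u) < +∞` and `g^♮♮(x_t;u) = g^r(x_t;u)` for all `t ∈ [0,1)`, then the
restriction of `g` to any such segment is continuous at the endpoints and
locally Lipschitz at every interior point; in particular `g^r(x;u)` is finite
at every interior point. -/
theorem stmt12 (g : X → EReal)
    (hbot : ∀ x, g x ≠ ⊥) (hlsc : LowerSemicontinuous g)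
    (hdomconv : Convex ℝ {x : X | g x ≠ ⊤})
    (hmain : ∀ xb u : X, (∀ s ∈ Set.Icc (0:ℝ) 1, g (xb + s • u) ≠ ⊤) →
      ∀ t ∈ Set.Ico (0:ℝ) 1,
        frE g (xb + t • u) u ≠ ⊤ ∧
        fnatnatE g (xb + t • u) u = frE g (xb + t • u) u)
    (xb u : X) (hseg : ∀ s ∈ Set.Icc (0:ℝ) 1, g (xb + s • u) ≠ ⊤) :
    ContinuousWithinAt (fun s : ℝ => g (xb + s • u)) (Set.Icc 0 1) 0 ∧
    ContinuousWithinAt (fun s : ℝ => g (xb + s • u)) (Set.Icc 0 1) 1 ∧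
    ∀ t ∈ Set.Ioo (0:ℝ) 1,
      (∃ t₀ > (0:ℝ), ∃ lam > (0:ℝ), ∀ s ∈ Set.Ioo (0:ℝ) 1, ∀ r ∈ Set.Ioo (0:ℝ) 1,
        |s - t| < t₀ → |r - t| < t₀ →
          g (xb + r • u) - g (xb + s • u) ≤
            ((lam * ‖(xb + r • u) - (xb + s • u)‖ : ℝ) : EReal)) ∧
      frE g (xb + t • u) u ≠ ⊤ ∧ frE g (xb + t • u) u ≠ ⊥ := by

  have hcontline : ∀ (v w : X), Continuous (fun s : ℝ => v + s • w) := fun v w =>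
    continuous_const.add (continuous_id.smul continuous_const)
  have hpoint : ∀ s : ℝ, xb + u + s • (-u) = xb + (1 - s) • u := by
    intro s; module
  have hseg' : ∀ s ∈ Set.Icc (0:ℝ) 1, g (xb + u + s • (-u)) ≠ ⊤ := by
    intro s hs
    rw [hpoint]
    exact hseg (1 - s) ⟨by linarith [hs.2], by linarith [hs.1]⟩
  set f : ℝ → ℝ := fun s => (g (xb + s • u)).toReal with hf
  have hcoe : ∀ s ∈ Set.Icc (0:ℝ) 1, g (xb + s • u) = ((f s : ℝ) : EReal) := fun s hs =>
    (EReal.coe_toReal (hseg s hs) (hbot _)).symm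
  have hA : ∀ t ∈ Set.Ico (0:ℝ) 1, ∃ δ > (0:ℝ), ∃ M : ℝ, ∀ s : ℝ, |s - t| < δ →
      frE g (xb + s • u) u < (M : EReal) := fun t ht =>
    stepA g xb u t (hmain xb u hseg t ht).1 (hmain xb u hseg t ht).2
  have hB : ∀ t ∈ Set.Ioc (0:ℝ) 1, ∃ δ > (0:ℝ), ∃ M : ℝ, ∀ s : ℝ, |s - t| < δ →
      frE g (xb + s • u) (-u) < (M : EReal) := by
    intro t ht
    have h1t : (1 - t) ∈ Set.Ico (0:ℝ) 1 := ⟨by linarith [ht.2], by linarith [ht.1]⟩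
    obtain ⟨hfr, heq⟩ := hmain (xb + u) (-u) hseg' (1 - t) h1t
    obtain ⟨δ, hδ, M, hM⟩ := stepA g (xb + u) (-u) (1 - t) hfr heq
    refine ⟨δ, hδ, M, fun s hs => ?_⟩
    have h2 := hM (1 - s) (by rw [show (1 - s) - (1 - t) = -(s - t) by ring, abs_neg]; exact hs)
    rwa [hpoint, show 1 - (1 - s) = s by ring] at h2
  have forward : ∀ p q M : ℝ, p ≤ q → 0 ≤ p → q ≤ 1 →
      (∀ σ, p ≤ σ → σ < q → frE g (xb + σ • u) u < (M : EReal)) →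
      f q ≤ f p + M * (q - p) := by
    intro p q M hpq hp hq hd
    exact mvt g hlsc hbot xb u p q M hpq
      (fun s hs => hseg s ⟨le_trans hp hs.1, le_trans hs.2 hq⟩)
      (fun s hs => hd s hs.1 hs.2)
  have backward : ∀ p q M : ℝ, p ≤ q → 0 ≤ p → q ≤ 1 →
      (∀ σ, p < σ → σ ≤ q → frE g (xb + σ • u) (-u) < (M : EReal)) →
      f p ≤ f q + M * (q - p) := by
    intro p q M hpq hp hq hd
    have h1 := mvt g hlsc hbot (xb + u) (-u) (1 - q) (1 - p) M (by linarith)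
      (fun s hs => by
        rw [hpoint]
        exact hseg (1 - s) ⟨by linarith [hs.2], by linarith [hs.1]⟩)
      (fun s hs => by
        rw [hpoint]
        exact hd (1 - s) (by linarith [hs.2]) (by linarith [hs.1]))
    rw [hpoint, hpoint, show 1 - (1 - p) = p by ring, show 1 - (1 - q) = q by ring] at h1
    have h2 : f p ≤ f q + M * ((1 - p) - (1 - q)) := h1
    calc f p ≤ f q + M * ((1 - p) - (1 - q)) := h2
      _ = f q + M * (q - p) := by ring_nf
  refine ⟨?_, ?_, ?_⟩
  · -- continuity at 0
    obtain ⟨δp, hδp, Mp, hMp⟩ := hA 0 ⟨le_refl 0, zero_lt_one⟩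
    show Filter.Tendsto (fun s : ℝ => g (xb + s • u)) (nhdsWithin 0 (Set.Icc 0 1))
      (nhds (g (xb + (0:ℝ) • u)))
    rw [hcoe 0 ⟨le_refl 0, zero_le_one⟩]
    refine tendsto_order.2 ⟨?_, ?_⟩
    · intro y hy
      have hy' : y < g (xb + (0:ℝ) • u) := by
        rw [hcoe 0 ⟨le_refl 0, zero_le_one⟩]; exact hy
      have hev := hlsc (xb + (0:ℝ) • u) y hy'
      exact (((hcontline xb u).tendsto 0).eventually hev).filter_mono nhdsWithin_le_nhds
    · intro y hy
      obtain ⟨z, hz1, hz2⟩ := exists_between hy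
      have hztop : z ≠ ⊤ := fun h => absurd (h ▸ hz2) (not_top_lt)
      have hzbot : z ≠ ⊥ := fun h => absurd (h ▸ hz1) (by simp)
      have hwz : ((z.toReal : ℝ) : EReal) = z := EReal.coe_toReal hztop hzbot
      set w := z.toReal with hwdef
      have hwf : f 0 < w := by
        rw [← EReal.coe_lt_coe_iff, hwz]; exact hz1
      set η := min δp ((w - f 0) / (|Mp| + 1)) with hηdef
      have hη : 0 < η := lt_min hδp (div_pos (by linarith) (by positivity))
      have hball : ∀ᶠ s in nhds (0:ℝ), |s - 0| < η := by
        filter_upwards [Metric.ball_mem_nhds (0:ℝ) hη] with s hs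
        simpa [Real.dist_eq] using hs
      filter_upwards [self_mem_nhdsWithin, hball.filter_mono nhdsWithin_le_nhds] with s hsI hsη
      have hs0 : (0:ℝ) ≤ s := hsI.1
      have hsη' : s < η := by
        rw [sub_zero] at hsη
        exact lt_of_le_of_lt (le_abs_self s) hsη
      have hfs : f s ≤ f 0 + Mp * (s - 0) := forward 0 s Mp hs0 le_rfl hsI.2
        (fun σ h1 h2 => hMp σ (by
          rw [sub_zero, abs_of_nonneg h1]
          have := min_le_left δp ((w - f 0) / (|Mp| + 1))
          linarith))
      have hkey : s * (|Mp| + 1) < w - f 0 := by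
        rw [← lt_div_iff₀ (by positivity : (0:ℝ) < |Mp| + 1)]
        exact lt_of_lt_of_le hsη' (min_le_right _ _)
      have hineq : f s < w := by
        nlinarith [mul_nonneg (sub_nonneg.2 (le_abs_self Mp)) hs0]
      calc g (xb + s • u) = ((f s : ℝ) : EReal) := hcoe s hsI
        _ < z := by rw [← hwz]; exact_mod_cast hineq
        _ < y := hz2
  · -- continuity at 1
    obtain ⟨δm, hδm, Mm, hMm⟩ := hB 1 ⟨zero_lt_one, le_refl 1⟩
    show Filter.Tendsto (fun s : ℝ => g (xb + s • u)) (nhdsWithin 1 (Set.Icc 0 1))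
      (nhds (g (xb + (1:ℝ) • u)))
    rw [hcoe 1 ⟨zero_le_one, le_refl 1⟩]
    refine tendsto_order.2 ⟨?_, ?_⟩
    · intro y hy
      have hy' : y < g (xb + (1:ℝ) • u) := by
        rw [hcoe 1 ⟨zero_le_one, le_refl 1⟩]; exact hy
      have hev := hlsc (xb + (1:ℝ) • u) y hy'
      exact (((hcontline xb u).tendsto 1).eventually hev).filter_mono nhdsWithin_le_nhds
    · intro y hy
      obtain ⟨z, hz1, hz2⟩ := exists_between hy
      have hztop : z ≠ ⊤ := fun h => absurd (h ▸ hz2) (not_top_lt)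
      have hzbot : z ≠ ⊥ := fun h => absurd (h ▸ hz1) (by simp)
      have hwz : ((z.toReal : ℝ) : EReal) = z := EReal.coe_toReal hztop hzbot
      set w := z.toReal with hwdef
      have hwf : f 1 < w := by
        rw [← EReal.coe_lt_coe_iff, hwz]; exact hz1
      set η := min δm ((w - f 1) / (|Mm| + 1)) with hηdef
      have hη : 0 < η := lt_min hδm (div_pos (by linarith) (by positivity))
      have hball : ∀ᶠ s in nhds (1:ℝ), |s - 1| < η := by
        filter_upwards [Metric.ball_mem_nhds (1:ℝ) hη] with s hs
        simpa [Real.dist_eq] using hs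
      filter_upwards [self_mem_nhdsWithin, hball.filter_mono nhdsWithin_le_nhds] with s hsI hsη
      have hs1 : s ≤ 1 := hsI.2
      have h1s : 1 - s < η := by
        rw [abs_of_nonpos (by linarith)] at hsη
        linarith
      have hfs : f s ≤ f 1 + Mm * (1 - s) := backward s 1 Mm hs1 hsI.1 le_rfl
        (fun σ h1 h2 => hMm σ (by
          rw [abs_of_nonpos (by linarith), neg_sub]
          have := min_le_left δm ((w - f 1) / (|Mm| + 1))
          linarith))
      have hkey : (1 - s) * (|Mm| + 1) < w - f 1 := by
        rw [← lt_div_iff₀ (by positivity : (0:ℝ) < |Mm| + 1)]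
        exact lt_of_lt_of_le h1s (min_le_right _ _)
      have hineq : f s < w := by
        nlinarith [mul_nonneg (sub_nonneg.2 (le_abs_self Mm)) (by linarith : (0:ℝ) ≤ 1 - s)]
      calc g (xb + s • u) = ((f s : ℝ) : EReal) := hcoe s hsI
        _ < z := by rw [← hwz]; exact_mod_cast hineq
        _ < y := hz2
  · -- interior points
    intro t ht
    obtain ⟨δp, hδp, Mp, hMp⟩ := hA t ⟨ht.1.le, ht.2⟩
    obtain ⟨δm, hδm, Mm, hMm⟩ := hB t ⟨ht.1, ht.2.le⟩
    refine ⟨?_, (hmain xb u hseg t ⟨ht.1.le, ht.2⟩).1, ?_⟩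
    · -- local Lipschitz
      by_cases hu : u = 0
      · refine ⟨1, one_pos, 1, one_pos, ?_⟩
        intro s hsI r hrI hst hrt
        have h0 : g (xb + r • u) = ((f 0 : ℝ) : EReal) := by
          rw [hu, smul_zero, add_zero, show xb = xb + (0:ℝ) • u by simp]
          exact hcoe 0 ⟨le_refl 0, zero_le_one⟩
        have h0' : g (xb + s • u) = ((f 0 : ℝ) : EReal) := by
          rw [hu, smul_zero, add_zero, show xb = xb + (0:ℝ) • u by simp]
          exact hcoe 0 ⟨le_refl 0, zero_le_one⟩
        rw [h0, h0', ← EReal.coe_sub, sub_self]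
        have : (0:ℝ) ≤ 1 * ‖(xb + r • u) - (xb + s • u)‖ := by positivity
        exact_mod_cast this
      · have hun : (0:ℝ) < ‖u‖ := norm_pos_iff.2 hu
        refine ⟨min δp δm, lt_min hδp hδm, (|Mp| + |Mm| + 1) / ‖u‖, by positivity, ?_⟩
        intro s hsI r hrI hst hrt
        have hstp : |s - t| < δp := lt_of_lt_of_le hst (min_le_left _ _)
        have hstm : |s - t| < δm := lt_of_lt_of_le hst (min_le_right _ _)
        have hrtp : |r - t| < δp := lt_of_lt_of_le hrt (min_le_left _ _)
        have hrtm : |r - t| < δm := lt_of_lt_of_le hrt (min_le_right _ _)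
        have hnorm : ‖(xb + r • u) - (xb + s • u)‖ = |r - s| * ‖u‖ := by
          rw [show (xb + r • u) - (xb + s • u) = (r - s) • u by module, norm_smul,
            Real.norm_eq_abs]
        rw [hcoe r ⟨hrI.1.le, hrI.2.le⟩, hcoe s ⟨hsI.1.le, hsI.2.le⟩, hnorm, ← EReal.coe_sub,
          EReal.coe_le_coe_iff]
        have key : f r - f s ≤ (|Mp| + |Mm|) * |r - s| := by
          rcases le_total s r with hsr | hrs
          · have h1 : f r ≤ f s + Mp * (r - s) := forward s r Mp hsr hsI.1.le hrI.2.le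
              (fun σ h1 h2 => hMp σ (by
                rw [abs_lt]
                exact ⟨by linarith [(abs_lt.1 hstp).1], by linarith [(abs_lt.1 hrtp).2]⟩))
            have habs : |r - s| = r - s := abs_of_nonneg (by linarith)
            rw [habs]
            linarith [mul_le_mul_of_nonneg_right (le_abs_self Mp) (by linarith : (0:ℝ) ≤ r - s),
              mul_nonneg (abs_nonneg Mm) (by linarith : (0:ℝ) ≤ r - s)]
          · have h1 : f r ≤ f s + Mm * (s - r) := backward r s Mm hrs hrI.1.le hsI.2.le
              (fun σ h1 h2 => hMm σ (by
                rw [abs_lt]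
                exact ⟨by linarith [(abs_lt.1 hrtm).1], by linarith [(abs_lt.1 hstm).2]⟩))
            have habs : |r - s| = s - r := by rw [abs_sub_comm]; exact abs_of_nonneg (by linarith)
            rw [habs]
            linarith [mul_le_mul_of_nonneg_right (le_abs_self Mm) (by linarith : (0:ℝ) ≤ s - r),
              mul_nonneg (abs_nonneg Mp) (by linarith : (0:ℝ) ≤ s - r)]
        calc f r - f s ≤ (|Mp| + |Mm|) * |r - s| := key
          _ ≤ (|Mp| + |Mm| + 1) * |r - s| := by nlinarith [abs_nonneg (r - s)]
          _ = (|Mp| + |Mm| + 1) / ‖u‖ * (|r - s| * ‖u‖) := by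
            field_simp
    · -- frE ≠ ⊥ and ≠ ⊤ part: the ⊥ part
      have hfin0 : g (xb + t • u) ≠ ⊤ := hseg t ⟨ht.1.le, ht.2.le⟩
      have hge : ((-|Mm| : ℝ) : EReal) ≤ frE g (xb + t • u) u := by
        rw [frE, if_neg hfin0]
        refine Filter.le_liminf_of_le (by isBoundedDefault) ?_
        have hev : ∀ᶠ τ in nhdsWithin (0:ℝ) (Set.Ioi 0), τ ∈ Set.Ioo 0 (min δm (1 - t)) :=
          Ioo_mem_nhdsGT_of_mem ⟨le_refl 0, lt_min hδm (by linarith [ht.2])⟩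
        filter_upwards [hev] with τ hτ
        have hτ0 : 0 < τ := hτ.1
        have hτδ : τ < δm := hτ.2.trans_le (min_le_left _ _)
        have hτ1 : t + τ ≤ 1 := by
          have := hτ.2.trans_le (min_le_right _ _); linarith
        have hb1 : f t ≤ f (t + τ) + Mm * ((t + τ) - t) := backward t (t + τ) Mm
          (by linarith) ht.1.le hτ1
          (fun σ h1 h2 => hMm σ (by rw [abs_lt]; exact ⟨by linarith, by linarith⟩))
        rw [show (xb + t • u) + τ • u = xb + (t + τ) • u by module,
          hcoe (t + τ) ⟨by linarith [ht.1, hτ0], hτ1⟩, hcoe t ⟨ht.1.le, ht.2.le⟩, ← EReal.coe_sub,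
          ← EReal.coe_mul, EReal.coe_le_coe_iff, ← div_eq_mul_inv, le_div_iff₀ hτ0]
        nlinarith [mul_le_mul_of_nonneg_right (le_abs_self Mm) hτ0.le]
      intro hcon
      rw [hcon] at hge
      exact absurd (le_bot_iff.1 hge) (EReal.coe_ne_bot _)
end

section
/- Let φ, γ : [0,1] → ℝ ∪ {+∞} with φ lower semicontinuous, γ continuous real-valued, D₊γ(t) finite for all t ∈ [0,1), φ(0) finite, and D₊φ(t) ≤ D₊γ(t) for all t ∈ [0,1). Then φ(1) − γ(1) ≤ φ(0) − γ(0). -/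
open Filter Set Topology MeasureTheory

/-- If `φ` is lsc (never `-∞`) on `[0,1]` with `φ(0)` finite, `γ` is continuous
real-valued on `[0,1]` with `D₊γ(t)` finite on `[0,1)`, and
`D₊φ(t) ≤ D₊γ(t)` on `[0,1)`, then `φ(1) - γ(1) ≤ φ(0) - γ(0)`. -/
theorem stmt13 (φ : ℝ → EReal) (γ : ℝ → ℝ)
    (hbot : ∀ t, φ t ≠ ⊥)
    (hφ : LowerSemicontinuousOn φ (Set.Icc 0 1))
    (hγ : ContinuousOn γ (Set.Icc 0 1))
    (hγfin : ∀ t ∈ Set.Ico (0:ℝ) 1, DlowR γ t ≠ ⊤ ∧ DlowR γ t ≠ ⊥)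
    (h0 : φ 0 ≠ ⊤)
    (hle : ∀ t ∈ Set.Ico (0:ℝ) 1, DlowE φ t ≤ DlowR γ t) :
    φ 1 - ((γ 1 : ℝ) : EReal) ≤ φ 0 - ((γ 0 : ℝ) : EReal) := by
  set x := (φ 0).toReal with hx
  have hφ0 : φ 0 = (x : EReal) := (EReal.coe_toReal h0 (hbot 0)).symm
  have key : ∀ ε : ℝ, 0 < ε → φ 1 ≤ ((x + γ 1 - γ 0 + ε : ℝ) : EReal) := by
    intro ε hε
    set g : ℝ → ℝ := fun t => x + γ t - γ 0 + ε * t with hg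
    set A : Set ℝ := {t | t ∈ Set.Icc (0:ℝ) 1 ∧ φ t ≤ ((g t : ℝ) : EReal)} with hA
    have hA_sub : A ⊆ Set.Icc 0 1 := fun t ht => ht.1
    have h0A : (0:ℝ) ∈ A := by
      refine ⟨⟨le_refl 0, zero_le_one⟩, ?_⟩
      rw [hφ0]
      simp [hg]
    have hgc : ContinuousOn g (Set.Icc 0 1) := by
      apply ContinuousOn.add
      · exact (continuousOn_const.add hγ).sub continuousOn_const
      · exact continuousOn_const.mul continuousOn_id
    have hA_closed : IsClosed A := by
      refine isClosed_of_closure_subset ?_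
      intro t ht
      have htIcc : t ∈ Set.Icc (0:ℝ) 1 := by
        have := closure_mono hA_sub ht
        rwa [isClosed_Icc.closure_eq] at this
      refine ⟨htIcc, ?_⟩
      by_contra hlt
      push_neg at hlt
      obtain ⟨y, hy1, hy2⟩ := exists_between hlt
      have hne : (𝓝[A] t).NeBot := mem_closure_iff_nhdsWithin_neBot.mp ht
      have hev1 : ∀ᶠ s in 𝓝[Set.Icc (0:ℝ) 1] t, y < φ s := hφ t htIcc y hy2
      have hev2 : ∀ᶠ s in 𝓝[Set.Icc (0:ℝ) 1] t, ((g s : ℝ) : EReal) < y := by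
        have hcw : ContinuousWithinAt (fun s => ((g s : ℝ) : EReal)) (Set.Icc 0 1) t :=
          continuous_coe_real_ereal.continuousAt.comp_continuousWithinAt (hgc t htIcc)
        exact hcw.eventually_lt continuousWithinAt_const hy1
      have hle' : 𝓝[A] t ≤ 𝓝[Set.Icc (0:ℝ) 1] t := nhdsWithin_mono t hA_sub
      have hmem : ∀ᶠ s in 𝓝[A] t, s ∈ A := eventually_mem_nhdsWithin
      obtain ⟨s, hs1, hs2, hs3⟩ := ((hev1.filter_mono hle').and
        ((hev2.filter_mono hle').and hmem)).exists
      exact absurd (hs3.2.trans_lt (hs2.trans hs1)) (lt_irrefl _)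
    have hbdd : BddAbove A := ⟨1, fun t ht => ht.1.2⟩
    have hTA : sSup A ∈ A := hA_closed.csSup_mem ⟨0, h0A⟩ hbdd
    set T := sSup A with hT
    have hT1 : T ≤ 1 := hTA.1.2
    have hT0 : 0 ≤ T := hTA.1.1
    have hTeq : T = 1 := by
      by_contra hne
      have hTlt : T < 1 := lt_of_le_of_ne hT1 hne
      have hφT_ne : φ T ≠ ⊤ := by
        intro h
        have := hTA.2
        rw [h] at this
        exact absurd this (by simp)
      have hφT : φ T = ((φ T).toReal : EReal) := (EReal.coe_toReal hφT_ne (hbot T)).symm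
      set a := (φ T).toReal with ha'
      have hTmem : T ∈ Set.Ico (0:ℝ) 1 := ⟨hT0, hTlt⟩
      have hLfin := hγfin T hTmem
      have hL : DlowR γ T = ((DlowR γ T).toReal : EReal) :=
        (EReal.coe_toReal hLfin.1 hLfin.2).symm
      set L := (DlowR γ T).toReal with hL'
      have hDE : DlowE φ T ≤ (L : EReal) := by
        have := hle T hTmem
        rwa [hL] at this
      rw [DlowE, if_neg hφT_ne] at hDE
      have hF1 : ∃ᶠ s in 𝓝[>] (0:ℝ),
          (φ (T + s) - φ T) * ((s⁻¹ : ℝ) : EReal) < ((L + ε/2 : ℝ) : EReal) := by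
        refine Filter.frequently_lt_of_liminf_lt (by isBoundedDefault)
          (lt_of_le_of_lt hDE ?_)
        exact_mod_cast (by linarith : L < L + ε/2)
      have hE2 : ∀ᶠ s in 𝓝[>] (0:ℝ),
          ((L - ε/2 : ℝ) : EReal) < (((γ (T + s) - γ T) / s : ℝ) : EReal) := by
        refine Filter.eventually_lt_of_lt_liminf ?_ (by isBoundedDefault)
        show ((L - ε/2 : ℝ) : EReal) < DlowR γ T
        rw [hL]
        exact_mod_cast (by linarith : L - ε/2 < L)
      have hE3 : ∀ᶠ s in 𝓝[>] (0:ℝ), s ∈ Set.Ioo (0:ℝ) (1 - T) := by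
        have : Set.Ioo (0:ℝ) (1 - T) ∈ 𝓝[>] (0:ℝ) :=
          Ioo_mem_nhdsGT_of_mem ⟨le_refl 0, by linarith⟩
        exact eventually_of_mem this (fun s hs => hs)
      obtain ⟨s, hs1, hs2, hs0, hsT⟩ := (hF1.and_eventually (hE2.and hE3)).exists
      have hs_pos : 0 < s := hs0
      have hne_top : φ (T + s) ≠ ⊤ := by
        intro h
        rw [h, hφT, EReal.top_sub_coe, EReal.top_mul_coe_of_pos (inv_pos.mpr hs_pos)]
          at hs1
        exact absurd hs1 (not_lt.mpr le_top)
      have hb : φ (T + s) = ((φ (T + s)).toReal : EReal) :=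
        (EReal.coe_toReal hne_top (hbot _)).symm
      set b := (φ (T + s)).toReal with hb'
      rw [hφT, hb] at hs1
      have hs1' : (b - a) * s⁻¹ < L + ε/2 := by exact_mod_cast hs1
      have hγs : L - ε/2 < (γ (T + s) - γ T) / s := by exact_mod_cast hs2
      have hbineq : b - a < (L + ε/2) * s := by
        rwa [← div_eq_mul_inv, div_lt_iff₀ hs_pos] at hs1'
      have hgineq : (L - ε/2) * s < γ (T + s) - γ T := by
        rwa [lt_div_iff₀ hs_pos] at hγs
      have haT : a ≤ g T := by
        have := hTA.2
        rw [hφT] at this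
        exact_mod_cast this
      have hTs : T + s ∈ A := by
        refine ⟨⟨by linarith, by linarith [hsT]⟩, ?_⟩
        rw [hb]
        have : b ≤ g (T + s) := by
          simp only [hg] at haT ⊢
          nlinarith [hsT]
        exact_mod_cast this
      have := le_csSup hbdd hTs
      rw [← hT] at this
      linarith
    have h1A : (1:ℝ) ∈ A := hTeq ▸ hTA
    have := h1A.2
    simpa [hg] using this
  have hne1 : φ 1 ≠ ⊤ := by
    intro h
    have := key 1 one_pos
    rw [h] at this
    exact EReal.coe_ne_top _ (top_le_iff.mp this)
  have hφ1 : φ 1 = ((φ 1).toReal : EReal) := (EReal.coe_toReal hne1 (hbot 1)).symm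
  set c := (φ 1).toReal with hc
  have hfin : c ≤ x + γ 1 - γ 0 := by
    refine le_of_forall_pos_le_add ?_
    intro ε hε
    have := key ε hε
    rw [hφ1] at this
    exact_mod_cast this
  calc φ 1 - ((γ 1 : ℝ) : EReal) ≤ ((x + γ 1 - γ 0 : ℝ) : EReal) - ((γ 1 : ℝ) : EReal) := by
        refine EReal.sub_le_sub ?_ le_rfl
        rw [hφ1]
        exact_mod_cast hfin
    _ = ((x + γ 1 - γ 0 - γ 1 : ℝ) : EReal) := by rw [← EReal.coe_sub]
    _ = ((x - γ 0 : ℝ) : EReal) := by norm_cast; ring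
    _ = φ 0 - ((γ 0 : ℝ) : EReal) := by rw [hφ0, ← EReal.coe_sub]
end

section
/- Let φ, γ : [0,1] → ℝ be continuous, and suppose that for all but countably many t ∈ [0,1], D₊γ(t) is finite and D⁺φ(t) ≤ D₊γ(t). Then φ(1) − γ(1) ≤ φ(0) − γ(0). -/
open Filter Set Topology MeasureTheory

/-!
Outside `C`, `D⁺(φ - γ) ≤ D⁺φ - D₊γ ≤ 0`, so it suffices to show that a continuous `f` on `[a, b]`
with `D⁺f ≤ 0` off a countable set `C` satisfies `f b ≤ f a`. For `g x = f x - ε x` there are, at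
every `t ∉ C`, points just to the right of `t` where `g < g t`. If `g a < g b`, pick `y ∈ (g a, g b)` outside the countable set `g '' C`; the last point `t` with
`g t = y` is then not in `C`, and a point `s > t` with `g s < y` gives, by the intermediate value
theorem on `[s, b]`, a later point where `g = y`.
-/

lemma dupR_sub_le_dupR_sub_dlowR (φ γ : ℝ → ℝ) (t : ℝ) (hγ_top : DlowR γ t ≠ ⊤)
    (hγ_bot : DlowR γ t ≠ ⊥) : DupR (φ - γ) t ≤ DupR φ t - DlowR γ t := by
  have hsplit : (fun s : ℝ => ((((φ - γ) (t + s) - (φ - γ) t) / s : ℝ) : EReal)) =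
      (fun s : ℝ => (((φ (t + s) - φ t) / s : ℝ) : EReal)) +
        -(fun s : ℝ => (((γ (t + s) - γ t) / s : ℝ) : EReal)) := by
    ext s
    simp only [Pi.sub_apply, Pi.add_apply, Pi.neg_apply, ← EReal.coe_neg, ← EReal.coe_add]
    congr 1
    ring
  rw [DupR, hsplit, sub_eq_add_neg, DlowR, ← EReal.limsup_neg]
  refine EReal.limsup_add_le (.inr ?_) (.inr ?_) <;>
    rw [EReal.limsup_neg] <;> simpa [EReal.neg_eq_top_iff, EReal.neg_eq_bot_iff]

theorem le_of_frequently_lt_off_countable {g : ℝ → ℝ} {a b : ℝ} (hab : a ≤ b)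
    (hg : ContinuousOn g (Icc a b)) {C : Set ℝ} (hC : C.Countable)
    (hdesc : ∀ t ∈ Ico a b \ C, ∃ᶠ s in 𝓝[>] 0, g (t + s) < g t) : g b ≤ g a := by
  by_contra! hlt
  obtain ⟨y, hyC, hy⟩ := ((hC.image g).dense_compl ℝ).exists_between hlt
  set S := Icc a b ∩ g ⁻¹' {y}
  have hS : IsCompact S := isCompact_Icc.of_isClosed_subset
    (hg.preimage_isClosed_of_isClosed isClosed_Icc isClosed_singleton) inter_subset_left
  obtain ⟨x, hx, hgx⟩ := intermediate_value_Icc hab hg (Ioo_subset_Icc_self hy)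
  have htS : sSup S ∈ S := hS.sSup_mem ⟨x, hx, hgx⟩
  set t := sSup S
  have hgt : g t = y := htS.2
  have htb : t < b := htS.1.2.lt_of_ne fun h => hy.2.ne' (h ▸ hgt)
  have htC : t ∉ C := fun h => hyC ⟨t, h, hgt⟩
  obtain ⟨s, hs, hs_pos, hs_le⟩ := ((hdesc t ⟨⟨htS.1.1, htb⟩, htC⟩).and_eventually
    (Ioc_mem_nhdsGT (sub_pos.2 htb))).exists
  obtain ⟨z, hz, hgz⟩ := intermediate_value_Icc (by linarith : t + s ≤ b)
    (hg.mono (Icc_subset_Icc (by linarith [htS.1.1]) le_rfl)) ⟨by linarith, hy.2.le⟩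
  have hzS : z ∈ S := ⟨⟨by linarith [htS.1.1, hz.1], hz.2⟩, hgz⟩
  linarith [le_csSup hS.bddAbove hzS, hz.1]

theorem le_of_dupR_nonpos_off_countable {f : ℝ → ℝ} {a b : ℝ} (hab : a ≤ b)
    (hf : ContinuousOn f (Icc a b)) {C : Set ℝ} (hC : C.Countable)
    (hD : ∀ t ∈ Ico a b \ C, DupR f t ≤ 0) : f b ≤ f a := by
  refine le_of_forall_pos_le_add fun δ hδ => ?_
  set ε := δ / (b - a + 1)
  have hε : 0 < ε := div_pos hδ (by linarith)
  have hεδ : ε * (b - a) ≤ δ := by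
    calc ε * (b - a) ≤ ε * (b - a + 1) := by nlinarith
      _ = δ := div_mul_cancel₀ δ (by linarith)
  suffices f b - ε * b ≤ f a - ε * a by linarith
  refine le_of_frequently_lt_off_countable (g := fun x => f x - ε * x) hab
    (hf.sub (continuousOn_const.mul continuousOn_id)) hC fun t ht => ?_
  have hslope : ∀ᶠ s in 𝓝[>] (0 : ℝ), (((f (t + s) - f t) / s : ℝ) : EReal) < ε :=
    eventually_lt_of_limsup_lt ((hD t ht).trans_lt (EReal.coe_pos.2 hε))
  refine (hslope.and self_mem_nhdsWithin).frequently.mono fun s ⟨hs, hs_pos⟩ => ?_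
  have : f (t + s) - f t < ε * s := (div_lt_iff₀ hs_pos).1 (EReal.coe_lt_coe_iff.1 hs)
  linarith

/-- If `φ, γ` are continuous on `[0,1]` and, outside a countable set,
`D₊γ(t)` is finite and `D⁺φ(t) ≤ D₊γ(t)`, then `φ(1) - γ(1) ≤ φ(0) - γ(0)`. -/
theorem stmt14 (φ γ : ℝ → ℝ)
    (hφ : ContinuousOn φ (Set.Icc 0 1))
    (hγ : ContinuousOn γ (Set.Icc 0 1))
    (C : Set ℝ) (hC : C.Countable)
    (h : ∀ t ∈ Set.Icc (0:ℝ) 1 \ C,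
      (DlowR γ t ≠ ⊤ ∧ DlowR γ t ≠ ⊥) ∧ DupR φ t ≤ DlowR γ t) :
    φ 1 - γ 1 ≤ φ 0 - γ 0 := by
  refine le_of_dupR_nonpos_off_countable zero_le_one (hφ.sub hγ) hC fun t ht => ?_
  obtain ⟨⟨hγ_top, hγ_bot⟩, hle⟩ := h t ⟨Ico_subset_Icc_self ht.1, ht.2⟩
  exact (dupR_sub_le_dupR_sub_dlowR φ γ t hγ_top hγ_bot).trans (EReal.sub_nonpos.2 hle)
end

section
/- Let f : X → ℝ be locally Lipschitz near x̄ on a Banach space X. Then f is strictly differentiable at x̄ in the direction u (i.e. lim_{t↘0, x→x̄} (f(x+tu)−f(x))/t exists in ℝ) if and only if f°(x̄;u) = −f°(x̄;−u), where f°(x̄;u) := limsup_{t↘0, x→x̄}(f(x+tu)−f(x))/t is the Clarke directional derivative. -/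
/-!
The shear `(t, x) ↦ (t, x + t • u)` preserves the filter `𝓝[>] 0 ×ˢ 𝓝 x̄` and turns the
difference quotient in direction `-u` into minus the one in direction `u`; hence
`-f°(x̄; -u)` is the liminf of the quotients in direction `u`, while `f°(x̄; u)` is their
limsup. Near `x̄` the Lipschitz bound keeps the quotients in `[-K‖u‖, K‖u‖]`, and a bounded
real function converges exactly when its limsup and liminf agree.
-/

open Filter Set Topology

variable {X : Type*} [NormedAddCommGroup X] [NormedSpace ℝ X] [CompleteSpace X]

/-- Clarke generalized directional derivative of a locally Lipschitz function. -/
noncomputable def clarkeDeriv (f : X → ℝ) (xb u : X) : EReal :=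
  Filter.limsup
    (fun p : ℝ × X => (((f (p.2 + p.1 • u) - f p.2) / p.1 : ℝ) : EReal))
    ((nhdsWithin 0 (Set.Ioi 0)) ×ˢ nhds xb)

theorem EReal.exists_tendsto_coe_iff_limsup_eq_liminf {α : Type*} {l : Filter α} [l.NeBot]
    {g : α → ℝ} {C : ℝ} (hC : ∀ᶠ a in l, |g a| ≤ C) :
    (∃ L : ℝ, Tendsto g l (𝓝 L)) ↔
      limsup (fun a => (g a : EReal)) l = liminf (fun a => (g a : EReal)) l := by
  constructor
  · rintro ⟨L, hL⟩
    have hL' := EReal.tendsto_coe.2 hL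
    rw [hL'.limsup_eq, hL'.liminf_eq]
  · intro h
    have hsup : limsup (fun a => (g a : EReal)) l ≤ C :=
      limsup_le_of_le (by isBoundedDefault)
        (hC.mono fun a ha => EReal.coe_le_coe_iff.2 (abs_le.1 ha).2)
    have hinf : ((-C : ℝ) : EReal) ≤ liminf (fun a => (g a : EReal)) l :=
      le_liminf_of_le (by isBoundedDefault)
        (hC.mono fun a ha => EReal.coe_le_coe_iff.2 (abs_le.1 ha).1)
    have hcoe : ((limsup (fun a => (g a : EReal)) l).toReal : EReal) =
        limsup (fun a => (g a : EReal)) l :=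
      EReal.coe_toReal (hsup.trans_lt (EReal.coe_lt_top C)).ne
        (h ▸ ((EReal.bot_lt_coe (-C)).trans_le hinf).ne')
    refine ⟨(limsup (fun a => (g a : EReal)) l).toReal, EReal.tendsto_coe.1 ?_⟩
    exact tendsto_of_liminf_eq_limsup (by rw [hcoe, h]) hcoe.symm

section Shear

variable {E : Type*} [TopologicalSpace E] [AddCommGroup E] [IsTopologicalAddGroup E]
  [Module ℝ E] [ContinuousSMul ℝ E] {l : Filter ℝ}

theorem tendsto_snd_add_fst_smul (hl : l ≤ 𝓝 0) (x w : E) :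
    Tendsto (fun p : ℝ × E => p.2 + p.1 • w) (l ×ˢ 𝓝 x) (𝓝 x) := by
  simpa using tendsto_snd.add ((tendsto_fst.mono_right hl).smul_const w)

theorem map_shear_prod_nhds (hl : l ≤ 𝓝 0) (x w : E) :
    map (fun p : ℝ × E => (p.1, p.2 + p.1 • w)) (l ×ˢ 𝓝 x) = l ×ˢ 𝓝 x :=
  map_eq_of_inverse (fun p => (p.1, p.2 + p.1 • -w)) (by ext <;> simp)
    (tendsto_fst.prodMk (tendsto_snd_add_fst_smul hl x w))
    (tendsto_fst.prodMk (tendsto_snd_add_fst_smul hl x (-w)))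

end Shear

theorem LipschitzOnWith.eventually_abs_div_le {E : Type*} [SeminormedAddCommGroup E]
    [NormedSpace ℝ E] {f : E → ℝ} {K : NNReal} {s : Set E} {x : E} (hf : LipschitzOnWith K f s)
    (hs : s ∈ 𝓝 x) (u : E) :
    ∀ᶠ p in 𝓝[>] (0 : ℝ) ×ˢ 𝓝 x, |(f (p.2 + p.1 • u) - f p.2) / p.1| ≤ K * ‖u‖ := by
  have hpos : ∀ᶠ p in 𝓝[>] (0 : ℝ) ×ˢ 𝓝 x, 0 < p.1 :=
    tendsto_fst.eventually self_mem_nhdsWithin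
  have hmem : ∀ᶠ p in 𝓝[>] (0 : ℝ) ×ˢ 𝓝 x, p.2 ∈ s := tendsto_snd.eventually hs
  have hmem' : ∀ᶠ p in 𝓝[>] (0 : ℝ) ×ˢ 𝓝 x, p.2 + p.1 • u ∈ s :=
    (tendsto_snd_add_fst_smul nhdsWithin_le_nhds x u).eventually hs
  filter_upwards [hpos, hmem, hmem'] with ⟨t, y⟩ ht hy hyu
  rw [abs_div, abs_of_pos ht, div_le_iff₀ ht, ← Real.dist_eq]
  calc dist (f (y + t • u)) (f y) ≤ K * dist (y + t • u) y := hf.dist_le_mul _ hyu _ hy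
    _ = K * ‖u‖ * t := by
      rw [dist_self_add_left, norm_smul, Real.norm_of_nonneg ht.le]; ring

omit [CompleteSpace X] in
theorem clarkeDeriv_neg (f : X → ℝ) (xb u : X) :
    clarkeDeriv f xb (-u) = -liminf (fun p : ℝ × X =>
      (((f (p.2 + p.1 • u) - f p.2) / p.1 : ℝ) : EReal)) (𝓝[>] 0 ×ˢ 𝓝 xb) := by
  rw [← EReal.limsup_neg, clarkeDeriv]
  conv_lhs => rw [← map_shear_prod_nhds nhdsWithin_le_nhds xb u, ← limsup_comp]
  congr 1
  ext p
  simp only [Function.comp_apply, Pi.neg_apply, ← EReal.coe_neg, add_neg_cancel_right,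
    smul_neg]
  congr 1
  ring

/-- For `f` locally Lipschitz near `x̄`, `f` is strictly differentiable at `x̄`
in the direction `u` (the strict limit of difference quotients exists in `ℝ`)
if and only if `f°(x̄;u) = -f°(x̄;-u)`. -/
theorem stmt17 (f : X → ℝ) (xb : X) (K : NNReal) (ε : ℝ) (hε : 0 < ε)
    (hlip : LipschitzOnWith K f (Metric.ball xb ε)) (u : X) :
    (∃ L : ℝ, Filter.Tendsto
        (fun p : ℝ × X => (f (p.2 + p.1 • u) - f p.2) / p.1)
        ((nhdsWithin 0 (Set.Ioi 0)) ×ˢ nhds xb) (nhds L)) ↔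
      clarkeDeriv f xb u = - clarkeDeriv f xb (-u) := by
  rw [clarkeDeriv_neg, neg_neg]
  exact EReal.exists_tendsto_coe_iff_limsup_eq_liminf
    (hlip.eventually_abs_div_le (Metric.ball_mem_nhds xb hε) u)
end

section
/- Let f : X → ℝ be Lipschitz on a neighborhood of x̄ in a Banach space X. Then f^♮♮(x̄;u) := inf_{α≥0} limsup_{x→x̄} f^r(x; u+α(x̄−x)) equals limsup_{x→x̄} f^r(x;u), and this equals the Clarke directional derivative f°(x̄;u). -/
open Filter Set Topology

variable {X : Type*} [NormedAddCommGroup X] [NormedSpace ℝ X] [CompleteSpace X]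

/-- Radial subderivative of a real-valued function on a Banach space. -/
noncomputable def frX (f : X → ℝ) (x u : X) : EReal :=
  Filter.liminf (fun t : ℝ => (((f (x + t • u) - f x) / t : ℝ) : EReal))
    (nhdsWithin 0 (Set.Ioi 0))

set_option linter.unusedSectionVars false

lemma ereal_le_of_forall_real {a b : EReal} (h : ∀ c : ℝ, a < (c : EReal) → b ≤ (c : EReal)) :
    b ≤ a := by
  by_contra hlt
  push_neg at hlt
  obtain ⟨c, hac, hcb⟩ := EReal.exists_between_coe_real hlt
  exact absurd (h c hac) (not_le.2 hcb)

lemma quot_le_of_frX_lt (f : X → ℝ) (xb : X) (K : NNReal) (ε : ℝ)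
    (hlip : LipschitzOnWith K f (Metric.ball xb ε)) (u : X) (c δ : ℝ)
    (hδε : δ ≤ ε)
    (hc : ∀ y ∈ Metric.ball xb δ, frX f y u < (c : EReal))
    (x : X) (hx : dist x xb < δ / 2) (t : ℝ) (ht : 0 < t) (htu : t * ‖u‖ < δ / 2) :
    (f (x + t • u) - f x) / t ≤ c := by
  set g : ℝ → ℝ := fun s => f (x + s • u) with hg
  have hmem : ∀ s ∈ Icc (0:ℝ) t, x + s • u ∈ Metric.ball xb δ := by
    intro s hs
    have h1 : dist (x + s • u) xb ≤ dist x xb + ‖s • u‖ := by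
      rw [dist_eq_norm, dist_eq_norm]
      calc ‖x + s • u - xb‖ = ‖(x - xb) + s • u‖ := by rw [add_sub_right_comm]
        _ ≤ ‖x - xb‖ + ‖s • u‖ := norm_add_le _ _
    have h2 : ‖s • u‖ ≤ t * ‖u‖ := by
      rw [norm_smul, Real.norm_eq_abs, abs_of_nonneg hs.1]
      exact mul_le_mul_of_nonneg_right hs.2 (norm_nonneg u)
    have := h1.trans_lt (by linarith : dist x xb + ‖s • u‖ < δ)
    simpa [Metric.mem_ball] using this
  have hmem' : ∀ s ∈ Icc (0:ℝ) t, x + s • u ∈ Metric.ball xb ε :=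
    fun s hs => Metric.ball_subset_ball hδε (hmem s hs)
  have hgc : ContinuousOn g (Icc 0 t) := by
    apply (hlip.continuousOn).comp (by fun_prop) hmem'
  have key : ∀ s ∈ Icc (0:ℝ) t, g s ≤ g 0 + c * s := by
    apply image_le_of_liminf_slope_right_le_deriv_boundary hgc
    · simp
    · fun_prop
    · intro s _
      have : HasDerivWithinAt (fun s : ℝ => g 0 + c * s) (c * 1) (Ici s) s :=
        ((hasDerivWithinAt_id s (Ici s)).const_mul c).const_add (g 0)
      simpa using this
    · intro s hs r hr
      have hfr : frX f (x + s • u) u < (r : EReal) :=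
        (hc _ (hmem s ⟨hs.1, hs.2.le⟩)).trans_le (by exact_mod_cast hr.le)
      have hfreq : ∃ᶠ h in 𝓝[>] (0:ℝ),
          (((f (x + s • u + h • u) - f (x + s • u)) / h : ℝ) : EReal) < (r : EReal) :=
        frequently_lt_of_liminf_lt (by isBoundedDefault) hfr
      have hmap : Filter.map (fun h : ℝ => s + h) (𝓝[>] (0:ℝ)) = 𝓝[>] s := by
        simpa using ((Homeomorph.addLeft s).isEmbedding.map_nhdsWithin_eq (Ioi 0) (0:ℝ))
      rw [← hmap, frequently_map]
      refine hfreq.mp (eventually_nhdsWithin_of_forall fun h hh hlt => ?_)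
      have hh' : (0:ℝ) < h := hh
      rw [slope_def_field]
      have : g (s + h) = f (x + s • u + h • u) := by
        simp [hg, add_smul, add_assoc]
      rw [this, hg]
      have : s + h - s = h := by ring
      rw [this]
      exact_mod_cast hlt
  have := key t ⟨ht.le, le_rfl⟩
  have hg0 : g 0 = f x := by simp [hg]
  rw [hg0] at this
  rw [div_le_iff₀ ht]
  calc f (x + t • u) - f x ≤ c * t := by simpa [hg] using (by linarith : g t - f x ≤ c * t)
  _ = c * t := rfl
lemma frX_dir_le (f : X → ℝ) (xb : X) (K : NNReal) (ε : ℝ)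
    (hlip : LipschitzOnWith K f (Metric.ball xb ε)) (u v : X) (x : X)
    (hx : dist x xb < ε) :
    frX f x u ≤ frX f x v + (((K : ℝ) * ‖u - v‖ : ℝ) : EReal) := by
  set c₀ : ℝ := (K : ℝ) * ‖u - v‖ with hc₀
  have hev : ∀ᶠ t in 𝓝[>] (0:ℝ),
      (f (x + t • u) - f x) / t ≤ (f (x + t • v) - f x) / t + c₀ := by
    have h0 : (0:ℝ) < (ε - dist x xb) / (‖u‖ + ‖v‖ + 1) := by
      apply div_pos (by linarith) (by positivity)
    filter_upwards [Ioo_mem_nhdsGT_of_mem (⟨le_rfl, h0⟩ : (0:ℝ) ∈ Ico 0 _)]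
      with t ht
    obtain ⟨ht0, ht1⟩ := ht
    have hball : ∀ w : X, ‖w‖ ≤ ‖u‖ + ‖v‖ → x + t • w ∈ Metric.ball xb ε := by
      intro w hw
      have : dist (x + t • w) xb ≤ dist x xb + ‖t • w‖ := by
        rw [dist_eq_norm, dist_eq_norm, add_sub_right_comm]
        exact norm_add_le _ _
      have h2 : ‖t • w‖ ≤ t * (‖u‖ + ‖v‖) := by
        rw [norm_smul, Real.norm_eq_abs, abs_of_pos ht0]
        exact mul_le_mul_of_nonneg_left hw ht0.le
      have h3 : t * (‖u‖ + ‖v‖) < ε - dist x xb := by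
        calc t * (‖u‖ + ‖v‖) ≤ t * (‖u‖ + ‖v‖ + 1) := by nlinarith
        _ < ε - dist x xb := by
            rw [← lt_div_iff₀ (by positivity)]; exact ht1
      have h5 : dist x xb + ‖t • w‖ < ε := by linarith
      have := this.trans_lt h5
      simpa [Metric.mem_ball] using this
    have hu' := hball u (by linarith [norm_nonneg v])
    have hv' := hball v (by linarith [norm_nonneg u])
    have hd : f (x + t • u) - f (x + t • v) ≤ c₀ * t := by
      have := hlip.dist_le_mul _ hu' _ hv'
      rw [Real.dist_eq] at this
      have h4 : dist (x + t • u) (x + t • v) = t * ‖u - v‖ := by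
        rw [dist_add_left, dist_eq_norm, ← smul_sub, norm_smul, Real.norm_eq_abs,
          abs_of_pos ht0]
      have := (le_abs_self _).trans this
      rw [h4] at this
      calc f (x + t • u) - f (x + t • v) ≤ (K:ℝ) * (t * ‖u - v‖) := this
      _ = c₀ * t := by rw [hc₀]; ring
    rw [div_add' _ _ _ ht0.ne', div_le_div_iff_of_pos_right ht0]
    linarith
  set A : ℝ → EReal := fun t : ℝ => (((f (x + t • v) - f x) / t + c₀ : ℝ) : EReal) with hA
  set B : ℝ → EReal := fun t : ℝ => (((f (x + t • v) - f x) / t : ℝ) : EReal) with hB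
  have hev' : ∀ᶠ t in 𝓝[>] (0:ℝ),
      (((f (x + t • u) - f x) / t : ℝ) : EReal) ≤ A t := by
    filter_upwards [hev] with t ht
    simp only [hA]
    exact_mod_cast ht
  have step1 : frX f x u ≤ Filter.liminf A (𝓝[>] (0:ℝ)) :=
    Filter.liminf_le_liminf hev'
  have step2 : Filter.liminf A (𝓝[>] (0:ℝ)) = Filter.liminf ((fun _ : ℝ => (c₀ : EReal)) + B) (𝓝[>] (0:ℝ)) := by
    apply Filter.liminf_congr
    filter_upwards with t
    simp [hA, hB, EReal.coe_add, add_comm, Pi.add_apply]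
  have step3 : Filter.liminf ((fun _ : ℝ => (c₀ : EReal)) + B) (𝓝[>] (0:ℝ)) ≤
      Filter.limsup (fun _ : ℝ => (c₀ : EReal)) (𝓝[>] (0:ℝ)) + Filter.liminf B (𝓝[>] (0:ℝ)) := by
    apply EReal.liminf_add_le
    · left; rw [Filter.limsup_const]; exact EReal.coe_ne_bot c₀
    · left; rw [Filter.limsup_const]; exact EReal.coe_ne_top c₀
  have step4 : Filter.limsup (fun _ : ℝ => (c₀ : EReal)) (𝓝[>] (0:ℝ)) + Filter.liminf B (𝓝[>] (0:ℝ))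
      = frX f x v + (c₀ : EReal) := by rw [Filter.limsup_const, add_comm]; rfl
  exact step1.trans (step2 ▸ (step3.trans step4.le))

/-- For `f` Lipschitz near `x̄`:
`f^♮♮(x̄;u) = inf_{α ≥ 0} limsup_{x→x̄} f^r(x; u + α(x̄-x))` equals
`limsup_{x→x̄} f^r(x;u)`, and this equals the Clarke derivative `f°(x̄;u)`. -/
theorem stmt18 (f : X → ℝ) (xb : X) (K : NNReal) (ε : ℝ) (hε : 0 < ε)
    (hlip : LipschitzOnWith K f (Metric.ball xb ε)) (u : X) :
    (⨅ (α : ℝ) (_ : 0 ≤ α),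
        Filter.limsup (fun x : X => frX f x (u + α • (xb - x))) (nhds xb)) =
      Filter.limsup (fun x : X => frX f x u) (nhds xb) ∧
    Filter.limsup (fun x : X => frX f x u) (nhds xb) = clarkeDeriv f xb u := by
  constructor
  · refine le_antisymm ?_ ?_
    · have h := iInf₂_le
        (f := fun (α : ℝ) (_ : 0 ≤ α) =>
          Filter.limsup (fun x : X => frX f x (u + α • (xb - x))) (𝓝 xb)) 0 le_rfl
      simpa using h
    · apply le_iInf₂
      intro α hα
      apply ereal_le_of_forall_real
      intro c hc
      obtain ⟨c', hc1, hc2⟩ := EReal.exists_between_coe_real hc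
      have hc2' : c' < c := by exact_mod_cast hc2
      have hev1 : ∀ᶠ x in 𝓝 xb, frX f x (u + α • (xb - x)) < (c' : EReal) :=
        eventually_lt_of_limsup_lt hc1
      have htend : Tendsto (fun x : X => (K : ℝ) * (α * dist x xb)) (𝓝 xb) (𝓝 0) := by
        have h1 : Tendsto (fun x : X => dist x xb) (𝓝 xb) (𝓝 (dist xb xb)) :=
          (continuous_id.dist continuous_const).tendsto xb
        rw [dist_self] at h1
        have := (h1.const_mul α).const_mul (K : ℝ)
        simpa using this
      have hev2 : ∀ᶠ x in 𝓝 xb, (K : ℝ) * (α * dist x xb) < c - c' :=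
        htend.eventually_lt_const (by linarith)
      have hev3 : ∀ᶠ x in 𝓝 xb, dist x xb < ε := by
        filter_upwards [Metric.ball_mem_nhds xb hε] with x hx
        simpa [Metric.mem_ball] using hx
      have hev : ∀ᶠ x in 𝓝 xb, frX f x u ≤ (c : EReal) := by
        filter_upwards [hev1, hev2, hev3] with x h1 h2 h3
        have hkey := frX_dir_le f xb K ε hlip u (u + α • (xb - x)) x h3
        have hnorm : (K : ℝ) * ‖u - (u + α • (xb - x))‖ = (K : ℝ) * (α * dist x xb) := by
          have : u - (u + α • (xb - x)) = -(α • (xb - x)) := by abel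
          rw [this, norm_neg, norm_smul, Real.norm_eq_abs, abs_of_nonneg hα,
            ← dist_eq_norm, dist_comm]
        rw [hnorm] at hkey
        have hlt : frX f x (u + α • (xb - x)) + (((K : ℝ) * (α * dist x xb) : ℝ) : EReal)
            < (c' : EReal) + ((c - c' : ℝ) : EReal) :=
          EReal.add_lt_add h1 (by exact_mod_cast h2)
        have : ((c' : ℝ) : EReal) + ((c - c' : ℝ) : EReal) = (c : EReal) := by
          rw [← EReal.coe_add]; norm_num
        exact hkey.trans_lt (this ▸ hlt) |>.le
      exact Filter.limsup_le_of_le (by isBoundedDefault) hev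
  · refine le_antisymm ?_ ?_
    · apply ereal_le_of_forall_real
      intro c hc
      have hev := eventually_lt_of_limsup_lt hc
      rw [eventually_prod_iff] at hev
      obtain ⟨pa, hpa, pb, hpb, himp⟩ := hev
      have hev' : ∀ᶠ x in 𝓝 xb, frX f x u ≤ (c : EReal) := by
        filter_upwards [hpb] with x hx
        apply Filter.liminf_le_of_frequently_le'
        exact hpa.frequently.mono fun t hpt => (himp hpt hx).le
      exact Filter.limsup_le_of_le (by isBoundedDefault) hev'
    · apply ereal_le_of_forall_real
      intro c hc
      have hev : ∀ᶠ x in 𝓝 xb, frX f x u < (c : EReal) :=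
        eventually_lt_of_limsup_lt hc
      rw [Metric.eventually_nhds_iff_ball] at hev
      obtain ⟨δ₀, hδ₀, hballc⟩ := hev
      set δ := min δ₀ ε with hδdef
      have hδpos : 0 < δ := lt_min hδ₀ hε
      have hδε : δ ≤ ε := min_le_right _ _
      have hc' : ∀ y ∈ Metric.ball xb δ, frX f y u < (c : EReal) := fun y hy =>
        hballc y (Metric.ball_subset_ball (min_le_left _ _) hy)
      set t₀ := δ / (2 * (‖u‖ + 1)) with ht₀def
      have ht₀ : 0 < t₀ := div_pos hδpos (by positivity)
      have key : ∀ᶠ p : ℝ × X in (𝓝[>] (0 : ℝ)) ×ˢ 𝓝 xb,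
          (((f (p.2 + p.1 • u) - f p.2) / p.1 : ℝ) : EReal) ≤ (c : EReal) := by
        rw [eventually_prod_iff]
        refine ⟨fun t => t ∈ Ioo (0 : ℝ) t₀,
          Filter.eventually_mem_set.2 (Ioo_mem_nhdsGT_of_mem ⟨le_rfl, ht₀⟩),
          fun x => x ∈ Metric.ball xb (δ / 2),
          Filter.eventually_mem_set.2 (Metric.ball_mem_nhds xb (by linarith)), ?_⟩
        intro t ht x hx
        have htu : t * ‖u‖ < δ / 2 := by
          have h1 : t < t₀ := ht.2
          have h2 : t * (2 * (‖u‖ + 1)) < δ := by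
            rwa [ht₀def, lt_div_iff₀ (by positivity)] at h1
          nlinarith [norm_nonneg u, ht.1]
        have := quot_le_of_frX_lt f xb K ε hlip u c δ hδε hc' x
          (by simpa [Metric.mem_ball] using hx) t ht.1 htu
        exact_mod_cast this
      exact Filter.limsup_le_of_le (by isBoundedDefault) key
end
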